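/- arXiv:1407.6106 — 2 statements merged into one kernel-verified Lean document; each statement's English description precedes it below -/
import Mathlib

section
/- Let φ and φ' be automorphisms of C*-algebras A and B respectively, let π : A → M(B) be a nondegenerate homomorphism, and let v ∈ M(B) be a unitary with vπ(φ(a)) = φ̄'(π(a))v for all a ∈ A, where φ̄' is the strict extension of φ'. Then ψ(a) := vπ(a) defines a nondegenerate correspondence homomorphism (ψ,π) : (A(φ),A) → (M(B(φ')),M(B)). Conversely, every nondegenerate correspondence homomorphism from (A(φ),A) into (M(B(φ')),M(B)) is of this form for a unique such unitary v. -/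
noncomputable section
namespace Paper

universe u

structure CAlg where
  carrier : Type u
  [inst : NonUnitalCStarAlgebra carrier]

attribute [instance] CAlg.inst
instance : CoeSort CAlg.{u} (Type u) := ⟨CAlg.carrier⟩

/-- A bundled right Hilbert C*-module over `A`. -/
structure HMod (A : CAlg.{u}) where
  carrier : Type u
  [instGrp : NormedAddCommGroup carrier]
  [instSp : NormedSpace ℂ carrier]
  [instCpl : CompleteSpace carrier]
  smulR : carrier → A.carrier → carrier
  inn : carrier → carrier → A.carrier
  add_smulR : ∀ x y a, smulR (x + y) a = smulR x a + smulR y a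
  smulR_add : ∀ x a b, smulR x (a + b) = smulR x a + smulR x b
  smulR_mul : ∀ x a b, smulR (smulR x a) b = smulR x (a * b)
  smulR_csmul : ∀ (c : ℂ) x a, smulR (c • x) a = c • smulR x a
  csmul_smulR : ∀ (c : ℂ) x a, smulR x (c • a) = c • smulR x a
  inn_add_right : ∀ x y z, inn x (y + z) = inn x y + inn x z
  inn_csmul_right : ∀ (c : ℂ) x y, inn x (c • y) = c • inn x y
  inn_smulR : ∀ x y a, inn x (smulR y a) = inn x y * a
  inn_star : ∀ x y, star (inn x y) = inn y x
  inn_self_nonneg : ∀ x, ∃ a, inn x x = star a * a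
  norm_eq : ∀ x, ‖x‖ = Real.sqrt ‖inn x x‖
  norm_inn_le : ∀ x y, ‖inn x y‖ ≤ ‖x‖ * ‖y‖
  norm_smulR_le : ∀ x a, ‖smulR x a‖ ≤ ‖x‖ * ‖a‖

attribute [instance] HMod.instGrp HMod.instSp HMod.instCpl
instance {A : CAlg.{u}} : CoeSort (HMod A) (Type u) := ⟨HMod.carrier⟩

/-- A bundled nondegenerate C*-correspondence over `A`. -/
structure Corr (A : CAlg.{u}) extends HMod A where
  lact : A.carrier → carrier → carrier
  lact_add : ∀ a x y, lact a (x + y) = lact a x + lact a y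
  lact_csmul : ∀ a (c : ℂ) x, lact a (c • x) = c • lact a x
  add_lact : ∀ a b x, lact (a + b) x = lact a x + lact b x
  csmul_lact : ∀ (c : ℂ) a x, lact (c • a) x = c • lact a x
  lact_mul : ∀ a b x, lact (a * b) x = lact a (lact b x)
  lact_adjoint : ∀ a x y, inn (lact a x) y = inn x (lact (star a) y)
  lact_smulR : ∀ a x b, lact a (smulR x b) = smulR (lact a x) b
  norm_lact_le : ∀ a x, ‖lact a x‖ ≤ ‖a‖ * ‖x‖
  nondeg : closure (↑(Submodule.span ℂ {z : carrier | ∃ a x, z = lact a x}) : Set carrier)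
      = Set.univ

instance {A : CAlg.{u}} : CoeSort (Corr A) (Type u) := ⟨fun X => X.carrier⟩

namespace Corr

variable {A : CAlg.{u}} (X : Corr A)

/-- The rank-one operator `θ_{m,n} : z ↦ m·⟨n,z⟩` as a continuous linear map. -/
def rankOne (m n : X.carrier) : X.carrier →L[ℂ] X.carrier :=
  LinearMap.mkContinuous
    { toFun := fun z => X.smulR m (X.inn n z)
      map_add' := fun y z => by
        show X.smulR m (X.inn n (y + z)) = X.smulR m (X.inn n y) + X.smulR m (X.inn n z)
        rw [X.inn_add_right, X.smulR_add]
      map_smul' := fun c z => by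
        show X.smulR m (X.inn n (c • z)) = c • X.smulR m (X.inn n z)
        rw [X.inn_csmul_right, X.csmul_smulR] }
    (‖m‖ * ‖n‖)
    (fun z => by
      calc ‖X.smulR m (X.inn n z)‖ ≤ ‖m‖ * ‖X.inn n z‖ := X.norm_smulR_le _ _
        _ ≤ ‖m‖ * (‖n‖ * ‖z‖) := by
              have := X.norm_inn_le n z
              have h0 : (0:ℝ) ≤ ‖m‖ := norm_nonneg m
              nlinarith [norm_nonneg (X.inn n z)]
        _ = ‖m‖ * ‖n‖ * ‖z‖ := by ring)

/-- Closed linear span of the rank-one operators with entries from `E`. -/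
def KSet (E : Set X.carrier) : Set (X.carrier →L[ℂ] X.carrier) :=
  closure (↑(Submodule.span ℂ {T | ∃ m ∈ E, ∃ n ∈ E, T = X.rankOne m n}) :
    Set (X.carrier →L[ℂ] X.carrier))

/-- The set-level Katsura ideal of a sub-correspondence `(E, D)` of `(X, A)`. -/
def subKatsura (E : Set X.carrier) (D : Set A.carrier) : Set A.carrier :=
  {a | a ∈ D ∧ (∃ T ∈ X.KSet E, ∀ z ∈ E, X.lact a z = T z) ∧
    ∀ b ∈ D, (∀ z ∈ E, X.lact b z = 0) → a * b = 0}

end Corr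

/-- Bundled data realizing the compact operators `K(X)` on a correspondence `X`. -/
structure Compacts {A : CAlg.{u}} (X : Corr A) where
  K : CAlg.{u}
  act : K.carrier → X.carrier → X.carrier
  θ : X.carrier → X.carrier → K.carrier
  act_add : ∀ k x y, act k (x + y) = act k x + act k y
  act_csmul : ∀ k (c : ℂ) x, act k (c • x) = c • act k x
  add_act : ∀ k l x, act (k + l) x = act k x + act l x
  csmul_act : ∀ (c : ℂ) k x, act (c • k) x = c • act k x
  act_mul : ∀ k l x, act (k * l) x = act k (act l x)
  act_adjoint : ∀ k x y, X.inn (act k x) y = X.inn x (act (star k) y)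
  act_injective : ∀ k, (∀ x, act k x = 0) → k = 0
  θ_apply : ∀ x y z, act (θ x y) z = X.smulR x (X.inn y z)
  dense : closure (↑(Submodule.span ℂ {k : K.carrier | ∃ x y, k = θ x y}) : Set K.carrier)
      = Set.univ

/-- The Katsura ideal `J_X` of a correspondence. -/
def Jideal {A : CAlg.{u}} {X : Corr A} (𝒦 : Compacts X) : Set A.carrier :=
  {a | (∃ k, ∀ x, 𝒦.act k x = X.lact a x) ∧
    ∀ b, (∀ x, X.lact b x = 0) → a * b = 0}

/-- A representation of `(X, A)` on a C*-algebra `B`, together with the induced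
map `ψ^{(1)}` on compact operators. -/
structure Rep1 {A : CAlg.{u}} {X : Corr A} (𝒦 : Compacts X) (B : CAlg.{u}) where
  ψ : X.carrier → B.carrier
  π : A.carrier →⋆ₙₐ[ℂ] B.carrier
  ψ_add : ∀ x y, ψ (x + y) = ψ x + ψ y
  ψ_csmul : ∀ (c : ℂ) x, ψ (c • x) = c • ψ x
  ψ_lact : ∀ a x, ψ (X.lact a x) = π a * ψ x
  ψ_inn : ∀ x y, (π (X.inn x y) : B.carrier) = star (ψ x) * ψ y
  ψ1 : 𝒦.K.carrier →⋆ₙₐ[ℂ] B.carrier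
  ψ1_θ : ∀ x y, ψ1 (𝒦.θ x y) = ψ x * star (ψ y)

/-- Covariance of a representation. -/
def Rep1.Covariant {A : CAlg.{u}} {X : Corr A} {𝒦 : Compacts X} {B : CAlg.{u}}
    (r : Rep1 𝒦 B) : Prop :=
  ∀ a k, a ∈ Jideal 𝒦 → (∀ x, 𝒦.act k x = X.lact a x) → r.ψ1 k = r.π a

/-- The Cuntz–Pimsner algebra of `(X, A)`: a C*-algebra together with a universal
covariant representation. -/
structure CuntzPimsner {A : CAlg.{u}} {X : Corr A} (𝒦 : Compacts X) where
  O : CAlg.{u}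
  k : Rep1 𝒦 O
  covariant : k.Covariant
  π_injective : Function.Injective k.π
  generated : closure (↑(NonUnitalStarAlgebra.adjoin ℂ (Set.range k.ψ ∪ Set.range k.π)) :
      Set O.carrier) = Set.univ
  lift : ∀ {B : CAlg.{u}} (r : Rep1 𝒦 B), r.Covariant → (O.carrier →⋆ₙₐ[ℂ] B.carrier)
  lift_ψ : ∀ {B : CAlg.{u}} (r : Rep1 𝒦 B) (h : r.Covariant) (x : X.carrier),
      lift r h (k.ψ x) = r.ψ x
  lift_π : ∀ {B : CAlg.{u}} (r : Rep1 𝒦 B) (h : r.Covariant) (a : A.carrier),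
      lift r h (k.π a) = r.π a
  lift_unique : ∀ {B : CAlg.{u}} (r : Rep1 𝒦 B) (h : r.Covariant)
      (g : O.carrier →⋆ₙₐ[ℂ] B.carrier),
      (∀ x, g (k.ψ x) = r.ψ x) → (∀ a, g (k.π a) = r.π a) → g = lift r h


/-- Bundled multiplier algebra `M(A)` of a C*-algebra `A`. -/
structure MulAlg (A : CAlg.{u}) where
  M : CAlg.{u}
  one : M.carrier
  one_mul : ∀ m : M.carrier, one * m = m
  mul_one : ∀ m : M.carrier, m * one = m
  star_one : star one = one
  ι : A.carrier →⋆ₙₐ[ℂ] M.carrier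
  injective : Function.Injective ι
  isometry : ∀ a, ‖ι a‖ = ‖a‖
  ideal_left : ∀ (m : M.carrier) (a : A.carrier), ∃ b, m * ι a = ι b
  ideal_right : ∀ (m : M.carrier) (a : A.carrier), ∃ b, ι a * m = ι b
  essential : ∀ m : M.carrier, (∀ a, m * ι a = 0) → m = 0
  largest : ∀ {D : CAlg.{u}} (j : A.carrier →⋆ₙₐ[ℂ] D.carrier), Function.Injective j →
      (∀ (d : D.carrier) (a : A.carrier), ∃ b, d * j a = j b) →
      (∀ (d : D.carrier) (a : A.carrier), ∃ b, j a * d = j b) →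
      (∀ d : D.carrier, (∀ a, d * j a = 0) → d = 0) →
      ∃ h : D.carrier →⋆ₙₐ[ℂ] M.carrier, ∀ a, h (j a) = ι a

/-- `M(A; I)`, the strict closure of an ideal(-like subset) `I` inside `M(A)`:
the set of multipliers which multiply `A` into `I`. -/
def MulAlg.MI {A : CAlg.{u}} (mA : MulAlg A) (I : Set A.carrier) : Set mA.M.carrier :=
  {m | (∀ a : A.carrier, ∃ b ∈ I, m * mA.ι a = mA.ι b) ∧
       (∀ a : A.carrier, ∃ b ∈ I, mA.ι a * m = mA.ι b)}

/-- The strict extension `π̄ : M(A) → M(B)` of a (nondegenerate) homomorphism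
`π : A → M(B)`. -/
structure StrictExtAlg {A B : CAlg.{u}} (mA : MulAlg A) (mB : MulAlg B)
    (π : A.carrier →⋆ₙₐ[ℂ] mB.M.carrier) where
  bar : mA.M.carrier →⋆ₙₐ[ℂ] mB.M.carrier
  bar_ι : ∀ a, bar (mA.ι a) = π a
  bar_one : bar mA.one = mB.one

/-- Pre-tensor-product data: `C` is a C*-completion of the algebraic tensor
product `A ⊙ B` with respect to some C*-norm. -/
structure CTensorPre (A B C : CAlg.{u}) where
  tmul : A.carrier → B.carrier → C.carrier
  add_tmul : ∀ a a' b, tmul (a + a') b = tmul a b + tmul a' b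
  tmul_add : ∀ a b b', tmul a (b + b') = tmul a b + tmul a b'
  csmul_tmul : ∀ (c : ℂ) a b, tmul (c • a) b = c • tmul a b
  tmul_csmul : ∀ (c : ℂ) a b, tmul a (c • b) = c • tmul a b
  tmul_mul : ∀ a a' b b', tmul a b * tmul a' b' = tmul (a * a') (b * b')
  tmul_star : ∀ a b, star (tmul a b) = tmul (star a) (star b)
  tmul_norm : ∀ a b, ‖tmul a b‖ = ‖a‖ * ‖b‖
  dense : closure (↑(Submodule.span ℂ {z : C.carrier | ∃ a b, z = tmul a b}) : Set C.carrier)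
      = Set.univ

/-- The minimal (spatial) tensor product `A ⊗ B`: the smallest C*-completion of
`A ⊙ B`, i.e. every C*-completion maps onto it. -/
structure CTensor (A B C : CAlg.{u}) extends CTensorPre A B C where
  minimal : ∀ {D : CAlg.{u}} (t : CTensorPre A B D),
      ∃ h : D.carrier →⋆ₙₐ[ℂ] C.carrier, ∀ a b, h (t.tmul a b) = tmul a b

/-- `A` is a nuclear C*-algebra: the C*-norm on `A ⊙ B` is unique for every `B`. -/
def Nuclear (A : CAlg.{u}) : Prop :=
  ∀ (B C D : CAlg.{u}) (t₁ : CTensorPre A B C) (t₂ : CTensorPre A B D),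
    ∃ h : C.carrier →⋆ₙₐ[ℂ] D.carrier, Function.Bijective h ∧
      ∀ a b, h (t₁.tmul a b) = t₂.tmul a b

/-- `A` is an exact C*-algebra: taking the minimal tensor product with `A`
preserves short exact sequences. -/
def Exact (A : CAlg.{u}) : Prop :=
  ∀ (B Q C D : CAlg.{u}) (q : B.carrier →⋆ₙₐ[ℂ] Q.carrier), Function.Surjective q →
    ∀ (t : CTensor B A C) (t' : CTensor Q A D) (h : C.carrier →⋆ₙₐ[ℂ] D.carrier),
      (∀ b a, h (t.tmul b a) = t'.tmul (q b) a) →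
      ∀ c : C.carrier, h c = 0 →
        c ∈ closure (↑(Submodule.span ℂ
          {z : C.carrier | ∃ b a, q b = 0 ∧ z = t.tmul b a}) : Set C.carrier)


/-- The tensor product correspondence `(X ⊗ S, A ⊗ S)` of a correspondence `(X, A)`
with a C*-algebra `S` (exterior tensor product). -/
structure CorrTensor {A : CAlg.{u}} (X : Corr A) (S : CAlg.{u}) {AS : CAlg.{u}}
    (tA : CTensorPre A S AS) where
  Y : Corr AS
  tmul : X.carrier → S.carrier → Y.carrier
  add_tmul : ∀ x x' s, tmul (x + x') s = tmul x s + tmul x' s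
  tmul_add : ∀ x s s', tmul x (s + s') = tmul x s + tmul x s'
  csmul_tmul : ∀ (c : ℂ) x s, tmul (c • x) s = c • tmul x s
  tmul_csmul : ∀ (c : ℂ) x s, tmul x (c • s) = c • tmul x s
  inn_tmul : ∀ x s y t, Y.inn (tmul x s) (tmul y t) = tA.tmul (X.inn x y) (star s * t)
  smulR_tmul : ∀ x s a t, Y.smulR (tmul x s) (tA.tmul a t) = tmul (X.smulR x a) (s * t)
  lact_tmul : ∀ a t x s, Y.lact (tA.tmul a t) (tmul x s) = tmul (X.lact a x) (t * s)
  dense : closure (↑(Submodule.span ℂ {z : Y.carrier | ∃ x s, z = tmul x s}) : Set Y.carrier)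
      = Set.univ

/-- Bundled multiplier correspondence `(M(X), M(A))` of a correspondence `(X, A)`. -/
structure MulCorr {A : CAlg.{u}} (X : Corr A) (mA : MulAlg A) where
  MX : Corr mA.M
  ι : X.carrier → MX.carrier
  ι_add : ∀ x y, ι (x + y) = ι x + ι y
  ι_csmul : ∀ (c : ℂ) x, ι (c • x) = c • ι x
  ι_injective : Function.Injective ι
  ι_isometry : ∀ x, ‖ι x‖ = ‖x‖
  ι_inn : ∀ x y, MX.inn (ι x) (ι y) = mA.ι (X.inn x y)
  ι_smulR : ∀ x a, MX.smulR (ι x) (mA.ι a) = ι (X.smulR x a)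
  ι_lact : ∀ a x, MX.lact (mA.ι a) (ι x) = ι (X.lact a x)
  lact_one : ∀ m : MX.carrier, MX.lact mA.one m = m
  smulR_one : ∀ m : MX.carrier, MX.smulR m mA.one = m
  idealR : ∀ (m : MX.carrier) (a : A.carrier), ∃ x, MX.smulR m (mA.ι a) = ι x
  essential : ∀ m m' : MX.carrier,
      (∀ a, MX.smulR m (mA.ι a) = MX.smulR m' (mA.ι a)) → m = m'

/-- The relative multiplier correspondence `M_C(X)` determined by a set of
multipliers (e.g. `M_{A}(X)` or `M_{A⊗S}(X⊗S)`): those `m ∈ M(X)` multiplying the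
given set into `X`. -/
def MulCorr.MRel {A : CAlg.{u}} {X : Corr A} {mA : MulAlg A} (mX : MulCorr X mA)
    (s : Set mA.M.carrier) : Set mX.MX.carrier :=
  {m | ∀ c ∈ s, mX.MX.lact c m ∈ Set.range mX.ι ∧ mX.MX.smulR m c ∈ Set.range mX.ι}

/-- The `A`-multiplier correspondence `M_A(X) ⊆ M(X)`. -/
def MulCorr.MA {A : CAlg.{u}} {X : Corr A} {mA : MulAlg A} (mX : MulCorr X mA) :
    Set mX.MX.carrier :=
  mX.MRel (Set.range mA.ι)

/-- Strict extension data for a (nondegenerate) correspondence homomorphism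
`(ψ₀, π) : (Y, B) → (M(D), M(D))` to the multiplier correspondence `(M(Y), M(B))`;
the extension `ψbar` is only required to have the extension properties on the
`B`-multiplier correspondence `M_B(Y)`. -/
structure CorrHomExt {B : CAlg.{u}} {Y : Corr B} (mB : MulAlg B) (mY : MulCorr Y mB)
    {D : CAlg.{u}} (mD : MulAlg D)
    (ψ₀ : Y.carrier → mD.M.carrier) (π : B.carrier →⋆ₙₐ[ℂ] mD.M.carrier) where
  πbar : mB.M.carrier →⋆ₙₐ[ℂ] mD.M.carrier
  πbar_ι : ∀ b, πbar (mB.ι b) = π b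
  πbar_one : πbar mB.one = mD.one
  ψbar : mY.MX.carrier → mD.M.carrier
  ψbar_ι : ∀ y, ψbar (mY.ι y) = ψ₀ y
  ψbar_add : ∀ m n, m ∈ mY.MA → n ∈ mY.MA → ψbar (m + n) = ψbar m + ψbar n
  ψbar_csmul : ∀ (c : ℂ) m, m ∈ mY.MA → ψbar (c • m) = c • ψbar m
  ψbar_smulR : ∀ m g, m ∈ mY.MA → ψbar (mY.MX.smulR m g) = ψbar m * πbar g
  ψbar_lact : ∀ g m, m ∈ mY.MA → ψbar (mY.MX.lact g m) = πbar g * ψbar m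
  ψbar_inn : ∀ m n, m ∈ mY.MA → n ∈ mY.MA →
      πbar (mY.MX.inn m n) = star (ψbar m) * ψbar n

/-- A bundled (bisimplifiable) Hopf C*-algebra structure on `S`, with the
comultiplication `Δ : S → M(S⊗S)`, the canonical embeddings `s ↦ s⊗1`, `s ↦ 1⊗s`,
and the coassociativity data on `S⊗S⊗S`. -/
structure HopfStr (S : CAlg.{u}) where
  S2 : CAlg.{u}
  tS : CTensor S S S2
  mS2 : MulAlg S2
  Δ : S.carrier →⋆ₙₐ[ℂ] mS2.M.carrier
  Δ_nondeg : closure (↑(Submodule.span ℂ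
      {z : S2.carrier | ∃ s u, mS2.ι z = Δ s * mS2.ι u}) : Set S2.carrier) = Set.univ
  inl : S.carrier →⋆ₙₐ[ℂ] mS2.M.carrier
  inr : S.carrier →⋆ₙₐ[ℂ] mS2.M.carrier
  inl_spec : ∀ s a b, inl s * mS2.ι (tS.tmul a b) = mS2.ι (tS.tmul (s * a) b)
  inr_spec : ∀ s a b, inr s * mS2.ι (tS.tmul a b) = mS2.ι (tS.tmul a (s * b))
  inl_spec' : ∀ s a b, mS2.ι (tS.tmul a b) * inl s = mS2.ι (tS.tmul (a * s) b)
  inr_spec' : ∀ s a b, mS2.ι (tS.tmul a b) * inr s = mS2.ι (tS.tmul a (b * s))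
  /-- bisimplifiability: `Δ(S)(1⊗S)` spans a dense subspace of `S⊗S` -/
  cancel_right : closure (↑(Submodule.span ℂ
      {z : S2.carrier | ∃ s u, mS2.ι z = Δ s * inr u}) : Set S2.carrier) = Set.univ
  /-- bisimplifiability: `Δ(S)(S⊗1)` spans a dense subspace of `S⊗S` -/
  cancel_left : closure (↑(Submodule.span ℂ
      {z : S2.carrier | ∃ s u, mS2.ι z = Δ s * inl u}) : Set S2.carrier) = Set.univ
  S3 : CAlg.{u}
  t12 : CTensor S2 S S3
  t23 : CTensor S S2 S3
  t_assoc : ∀ a b c, t12.tmul (tS.tmul a b) c = t23.tmul a (tS.tmul b c)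
  mS3 : MulAlg S3
  /-- the strict extension of `Δ ⊗ id_S` to `M(S⊗S)` -/
  Δid : mS2.M.carrier →⋆ₙₐ[ℂ] mS3.M.carrier
  Δid_one : Δid mS2.one = mS3.one
  Δid_spec : ∀ (b c : S.carrier) (z y : S2.carrier) (u : S.carrier),
      Δ b * mS2.ι z = mS2.ι y →
      Δid (mS2.ι (tS.tmul b c)) * mS3.ι (t12.tmul z u) = mS3.ι (t12.tmul y (c * u))
  /-- the strict extension of `id_S ⊗ Δ` to `M(S⊗S)` -/
  idΔ : mS2.M.carrier →⋆ₙₐ[ℂ] mS3.M.carrier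
  idΔ_one : idΔ mS2.one = mS3.one
  idΔ_spec : ∀ (a b : S.carrier) (c : S.carrier) (z y : S2.carrier),
      Δ b * mS2.ι z = mS2.ι y →
      idΔ (mS2.ι (tS.tmul a b)) * mS3.ι (t23.tmul c z) = mS3.ι (t23.tmul (a * c) y)
  /-- coassociativity -/
  coassoc : ∀ s, Δid (Δ s) = idΔ (Δ s)

/-- Coaction data of a Hopf C*-algebra `(S, Δ)` on a C*-algebra `A`, for a given
homomorphism `δ : A → M(A⊗S)` (so that one can say "`δ` is a coaction"):
nondegeneracy, coaction nondegeneracy, and the coaction identity. -/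
structure AlgCoactAux {S : CAlg.{u}} (hS : HopfStr S) (A : CAlg.{u}) {AS : CAlg.{u}}
    (tA : CTensor A S AS) (mAS : MulAlg AS)
    (δ : A.carrier →⋆ₙₐ[ℂ] mAS.M.carrier) where
  /-- the canonical embedding `s ↦ 1_{M(A)} ⊗ s` of `S` into `M(A⊗S)` -/
  inrS : S.carrier →⋆ₙₐ[ℂ] mAS.M.carrier
  inrS_spec : ∀ s a u, inrS s * mAS.ι (tA.tmul a u) = mAS.ι (tA.tmul a (s * u))
  inrS_spec' : ∀ s a u, mAS.ι (tA.tmul a u) * inrS s = mAS.ι (tA.tmul a (u * s))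
  /-- `δ` is nondegenerate as a homomorphism into `M(A⊗S)` -/
  nondeg : closure (↑(Submodule.span ℂ
      {z : AS.carrier | ∃ a w, mAS.ι z = δ a * mAS.ι w}) : Set AS.carrier) = Set.univ
  /-- coaction nondegeneracy: `δ(A)(1⊗S)` spans a dense subspace of `A⊗S` -/
  coact_nondeg : closure (↑(Submodule.span ℂ
      {z : AS.carrier | ∃ a s, mAS.ι z = δ a * inrS s}) : Set AS.carrier) = Set.univ
  AS2 : CAlg.{u}
  /-- `(A⊗S)⊗S` -/
  tAS2 : CTensor AS S AS2
  /-- `A⊗(S⊗S)` -/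
  tA23 : CTensor A hS.S2 AS2
  t_assoc : ∀ a s u, tAS2.tmul (tA.tmul a s) u = tA23.tmul a (hS.tS.tmul s u)
  mAS2 : MulAlg AS2
  /-- the strict extension of `δ ⊗ id_S` to `M(A⊗S)` -/
  δid : mAS.M.carrier →⋆ₙₐ[ℂ] mAS2.M.carrier
  δid_one : δid mAS.one = mAS2.one
  δid_spec : ∀ (a : A.carrier) (s : S.carrier) (z y : AS.carrier) (u : S.carrier),
      δ a * mAS.ι z = mAS.ι y →
      δid (mAS.ι (tA.tmul a s)) * mAS2.ι (tAS2.tmul z u) = mAS2.ι (tAS2.tmul y (s * u))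
  /-- the strict extension of `id_A ⊗ Δ` to `M(A⊗S)` -/
  idΔ : mAS.M.carrier →⋆ₙₐ[ℂ] mAS2.M.carrier
  idΔ_one : idΔ mAS.one = mAS2.one
  idΔ_spec : ∀ (a : A.carrier) (s : S.carrier) (c : A.carrier) (z y : hS.S2.carrier),
      hS.Δ s * hS.mS2.ι z = hS.mS2.ι y →
      idΔ (mAS.ι (tA.tmul a s)) * mAS2.ι (tA23.tmul c z) = mAS2.ι (tA23.tmul (a * c) y)
  /-- the coaction identity `(δ̄⊗id)∘δ = (id⊗Δ̄)∘δ` -/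
  coaction_identity : ∀ a, δid (δ a) = idΔ (δ a)

/-- A coaction of the Hopf C*-algebra `(S, Δ)` on the C*-algebra `A`, bundled. -/
structure AlgCoaction {S : CAlg.{u}} (hS : HopfStr S) (A : CAlg.{u}) where
  AS : CAlg.{u}
  tA : CTensor A S AS
  mAS : MulAlg AS
  δ : A.carrier →⋆ₙₐ[ℂ] mAS.M.carrier
  aux : AlgCoactAux hS A tA mAS δ

/-- Coaction data of a Hopf C*-algebra `(S, Δ)` on a nondegenerate C*-correspondence
`(X, A)`, for given maps `σ : X → M(X⊗S)` and a given coaction `δ` of `S` on `A`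
(standing for "`(σ, δ)` is a coaction of `S` on `(X, A)`"). -/
structure CorrCoactAux {S : CAlg.{u}} (hS : HopfStr S) {A : CAlg.{u}} (X : Corr A)
    (ac : AlgCoaction hS A) (XS : CorrTensor X S ac.tA.toCTensorPre)
    (mXS : MulCorr XS.Y ac.mAS) (σ : X.carrier → mXS.MX.carrier) where
  σ_add : ∀ x y, σ (x + y) = σ x + σ y
  σ_csmul : ∀ (c : ℂ) x, σ (c • x) = c • σ x
  /-- `(σ, δ)` is a correspondence homomorphism: compatibility with the left actions -/
  σ_lact : ∀ a x, mXS.MX.lact (ac.δ a) (σ x) = σ (X.lact a x)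
  /-- `(σ, δ)` is a correspondence homomorphism: compatibility with inner products -/
  σ_inn : ∀ x y, mXS.MX.inn (σ x) (σ y) = ac.δ (X.inn x y)
  /-- nondegeneracy: `σ(X)·(A⊗S)` spans a dense subspace of `X⊗S` -/
  nondeg : closure (↑(Submodule.span ℂ
      {z : XS.Y.carrier | ∃ x f, mXS.ι z = mXS.MX.smulR (σ x) (ac.mAS.ι f)}) :
      Set XS.Y.carrier) = Set.univ
  /-- coaction nondegeneracy: `φ_{M(A⊗S)}(1⊗S)·σ(X)` spans a dense subspace of `X⊗S` -/
  coact_nondeg : closure (↑(Submodule.span ℂ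
      {z : XS.Y.carrier | ∃ x s, mXS.ι z = mXS.MX.lact (ac.aux.inrS s) (σ x)}) :
      Set XS.Y.carrier) = Set.univ
  /-- `(X⊗S)⊗S` as a correspondence over `(A⊗S)⊗S` -/
  XS2 : CorrTensor XS.Y S ac.aux.tAS2.toCTensorPre
  /-- the map `X × (S⊗S) → X⊗S⊗S` -/
  tmul23 : X.carrier → hS.S2.carrier → XS2.Y.carrier
  tmul23_assoc : ∀ x s u, XS2.tmul (XS.tmul x s) u = tmul23 x (hS.tS.tmul s u)
  mXS2 : MulCorr XS2.Y ac.aux.mAS2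
  /-- the strict extension of `σ ⊗ id_S` to `M(X⊗S)` -/
  σid : mXS.MX.carrier → mXS2.MX.carrier
  σid_add : ∀ m n, σid (m + n) = σid m + σid n
  σid_csmul : ∀ (c : ℂ) m, σid (c • m) = c • σid m
  σid_smulR : ∀ m g, σid (mXS.MX.smulR m g) = mXS2.MX.smulR (σid m) (ac.aux.δid g)
  σid_inn : ∀ m n, mXS2.MX.inn (σid m) (σid n) = ac.aux.δid (mXS.MX.inn m n)
  σid_spec : ∀ (x : X.carrier) (s : S.carrier) (f : ac.AS.carrier) (u : S.carrier)
      (w : XS.Y.carrier),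
      mXS.MX.smulR (σ x) (ac.mAS.ι f) = mXS.ι w →
      mXS2.MX.smulR (σid (mXS.ι (XS.tmul x s))) (ac.aux.mAS2.ι (ac.aux.tAS2.tmul f u))
        = mXS2.ι (XS2.tmul w (s * u))
  /-- the strict extension of `id_X ⊗ Δ` to `M(X⊗S)` -/
  idΔX : mXS.MX.carrier → mXS2.MX.carrier
  idΔX_add : ∀ m n, idΔX (m + n) = idΔX m + idΔX n
  idΔX_csmul : ∀ (c : ℂ) m, idΔX (c • m) = c • idΔX m
  idΔX_smulR : ∀ m g, idΔX (mXS.MX.smulR m g) = mXS2.MX.smulR (idΔX m) (ac.aux.idΔ g)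
  idΔX_inn : ∀ m n, mXS2.MX.inn (idΔX m) (idΔX n) = ac.aux.idΔ (mXS.MX.inn m n)
  idΔX_spec : ∀ (x : X.carrier) (s : S.carrier) (c : A.carrier) (z y : hS.S2.carrier),
      hS.Δ s * hS.mS2.ι z = hS.mS2.ι y →
      mXS2.MX.smulR (idΔX (mXS.ι (XS.tmul x s))) (ac.aux.mAS2.ι (ac.aux.tA23.tmul c z))
        = mXS2.ι (tmul23 (X.smulR x c) y)
  /-- the coaction identity `(σ̄⊗id)∘σ = (id⊗Δ̄)∘σ` -/
  coaction_identity : ∀ x, σid (σ x) = idΔX (σ x)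

/-- A coaction of a Hopf C*-algebra `(S, Δ)` on a nondegenerate C*-correspondence
`(X, A)`, bundled. -/
structure CorrCoaction {S : CAlg.{u}} (hS : HopfStr S) {A : CAlg.{u}} (X : Corr A) where
  ac : AlgCoaction hS A
  XS : CorrTensor X S ac.tA.toCTensorPre
  mXS : MulCorr XS.Y ac.mAS
  σ : X.carrier → mXS.MX.carrier
  aux : CorrCoactAux hS X ac XS mXS σ

/-- The closed ideal `J ⊗ S` of `A ⊗ S` generated by elementary tensors from an
ideal `J` of `A`. -/
def tensIdeal {A S AS : CAlg.{u}} (tA : CTensorPre A S AS) (J : Set A.carrier) :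
    Set AS.carrier :=
  closure (↑(Submodule.span ℂ {z : AS.carrier | ∃ a ∈ J, ∃ s, z = tA.tmul a s}) :
    Set AS.carrier)

/-- Weak `δ`-invariance of the ideal `J_X`: `δ(J_X)(1⊗S) ⊆ J_X ⊗ S`. -/
def WeaklyInvariant {S : CAlg.{u}} {hS : HopfStr S} {A : CAlg.{u}} {X : Corr A}
    (cc : CorrCoaction hS X) (𝒦 : Compacts X) : Prop :=
  ∀ a ∈ Jideal 𝒦, ∀ s : S.carrier,
    ∃ z ∈ tensIdeal cc.ac.tA.toCTensorPre (Jideal 𝒦),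
      cc.ac.δ a * cc.ac.aux.inrS s = cc.ac.mAS.ι z

/-- The Hilbert-space kernel of a multiplicative unitary: a Hilbert space `H`,
its Hilbert tensor square `H2 = H⊗H` and cube `H3`, the flip, and a
multiplicative unitary `V` on `H⊗H` satisfying the pentagonal relation. -/
structure MUKernel where
  H : Type u
  [instH1 : NormedAddCommGroup H]
  [instH2 : InnerProductSpace ℂ H]
  [instH3 : CompleteSpace H]
  H2 : Type u
  [instK1 : NormedAddCommGroup H2]
  [instK2 : InnerProductSpace ℂ H2]
  [instK3 : CompleteSpace H2]
  tp : H → H → H2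
  tp_add_left : ∀ x x' y, tp (x + x') y = tp x y + tp x' y
  tp_add_right : ∀ x y y', tp x (y + y') = tp x y + tp x y'
  tp_smul_left : ∀ (c : ℂ) x y, tp (c • x) y = c • tp x y
  tp_smul_right : ∀ (c : ℂ) x y, tp x (c • y) = c • tp x y
  tp_inner : ∀ x y x' y', (inner ℂ (tp x y) (tp x' y') : ℂ) = inner ℂ x x' * inner ℂ y y'
  tp_norm : ∀ x y, ‖tp x y‖ = ‖x‖ * ‖y‖
  tp_dense : closure (↑(Submodule.span ℂ {z : H2 | ∃ x y, z = tp x y}) : Set H2) = Set.univ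
  /-- the flip `Σ` on `H⊗H` -/
  flip : H2 →L[ℂ] H2
  flip_spec : ∀ x y, flip (tp x y) = tp y x
  /-- the multiplicative unitary -/
  V : H2 →L[ℂ] H2
  V_unitary_left : ContinuousLinearMap.adjoint V * V = 1
  V_unitary_right : V * ContinuousLinearMap.adjoint V = 1
  H3 : Type u
  [instL1 : NormedAddCommGroup H3]
  [instL2 : InnerProductSpace ℂ H3]
  [instL3 : CompleteSpace H3]
  j12 : H2 → H → H3
  j23 : H → H2 → H3
  j_assoc : ∀ x y z, j12 (tp x y) z = j23 x (tp y z)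
  V12 : H3 →L[ℂ] H3
  V13 : H3 →L[ℂ] H3
  V23 : H3 →L[ℂ] H3
  Sig23 : H3 →L[ℂ] H3
  V12_spec : ∀ u z, V12 (j12 u z) = j12 (V u) z
  V23_spec : ∀ x u, V23 (j23 x u) = j23 x (V u)
  Sig23_spec : ∀ x y z, Sig23 (j23 x (tp y z)) = j23 x (tp z y)
  V13_def : V13 = Sig23 * V12 * Sig23
  /-- the pentagonal relation `V₁₂V₁₃V₂₃ = V₂₃V₁₂` -/
  pentagon : V12 * V13 * V23 = V23 * V12

attribute [instance] MUKernel.instH1 MUKernel.instH2 MUKernel.instH3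
  MUKernel.instK1 MUKernel.instK2 MUKernel.instK3
  MUKernel.instL1 MUKernel.instL2 MUKernel.instL3

namespace MUKernel

variable (W : MUKernel.{u})

/-- `y ↦ x ⊗ y` as a continuous linear map `H → H⊗H`. -/
def tpL (x : W.H) : W.H →L[ℂ] W.H2 :=
  LinearMap.mkContinuous
    { toFun := fun y => W.tp x y
      map_add' := W.tp_add_right x
      map_smul' := fun c y => by simpa using W.tp_smul_right c x y }
    ‖x‖ (fun y => le_of_eq (by show ‖W.tp x y‖ = ‖x‖ * ‖y‖; exact W.tp_norm x y))

/-- `x ↦ x ⊗ y` as a continuous linear map `H → H⊗H`. -/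
def tpR (y : W.H) : W.H →L[ℂ] W.H2 :=
  LinearMap.mkContinuous
    { toFun := fun x => W.tp x y
      map_add' := fun x x' => W.tp_add_left x x' y
      map_smul' := fun c x => by simpa using W.tp_smul_left c x y }
    ‖y‖ (fun x => le_of_eq (by show ‖W.tp x y‖ = ‖y‖ * ‖x‖; rw [W.tp_norm]; ring))

/-- the slice `(ω_{x,y} ⊗ id)(V)` of `V` by a vector functional in the first leg. -/
def sliceFst (x y : W.H) : W.H →L[ℂ] W.H :=
  (ContinuousLinearMap.adjoint (W.tpL x)).comp (W.V.comp (W.tpL y))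

/-- the slice `(id ⊗ ω_{x,y})(V)` of `V` by a vector functional in the second leg. -/
def sliceSnd (x y : W.H) : W.H →L[ℂ] W.H :=
  (ContinuousLinearMap.adjoint (W.tpR x)).comp (W.V.comp (W.tpR y))

/-- the slice `(id ⊗ ω_{x,y})(ΣV)`, used in the regularity condition. -/
def sliceSndSigV (x y : W.H) : W.H →L[ℂ] W.H :=
  (ContinuousLinearMap.adjoint (W.tpR x)).comp ((W.flip.comp W.V).comp (W.tpR y))

end MUKernel

/-- A well-behaved multiplicative unitary `V` (acting on `H⊗H`), together with its
reduced Hopf C*-algebra `S = S_V`, the dual reduced Hopf C*-algebra `Ŝ = Ŝ_V`,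
the algebra `𝒦 = K(H)` of compact operators with `M(𝒦) = B(H)`, and the
compatibility of the comultiplications with `V`. -/
structure ReducedMU extends MUKernel.{u} where
  /-- the C*-algebra `𝒦 = K(H)` -/
  𝒦 : CAlg.{u}
  m𝒦 : MulAlg 𝒦
  /-- the realization `M(𝒦) ≅ B(H)` -/
  ρ : m𝒦.M.carrier →⋆ₙₐ[ℂ] (H →L[ℂ] H)
  ρ_bijective : Function.Bijective ρ
  ρ_one : ρ m𝒦.one = 1
  ρ_compacts : Set.range (fun k : 𝒦.carrier => ρ (m𝒦.ι k))
      = {T : H →L[ℂ] H | IsCompactOperator ⇑T}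
  /-- the reduced Hopf C*-algebra `S = S_V` -/
  S : CAlg.{u}
  /-- the dual reduced Hopf C*-algebra `Ŝ = Ŝ_V` -/
  Sh : CAlg.{u}
  hS : HopfStr S
  hSh : HopfStr Sh
  ιS : S.carrier →⋆ₙₐ[ℂ] m𝒦.M.carrier
  ιSh : Sh.carrier →⋆ₙₐ[ℂ] m𝒦.M.carrier
  ιS_injective : Function.Injective ιS
  ιSh_injective : Function.Injective ιSh
  ιS_nondeg : closure (↑(Submodule.span ℂ
      {k : 𝒦.carrier | ∃ s k', m𝒦.ι k = ιS s * m𝒦.ι k'}) : Set 𝒦.carrier) = Set.univ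
  ιSh_nondeg : closure (↑(Submodule.span ℂ
      {k : 𝒦.carrier | ∃ x k', m𝒦.ι k = ιSh x * m𝒦.ι k'}) : Set 𝒦.carrier) = Set.univ
  /-- `S_V` is the norm closure of the slices `(ω ⊗ id)(V)`, `ω ∈ L(H)_*` -/
  S_slices : Set.range (fun s : S.carrier => ρ (ιS s))
      = closure (↑(Submodule.span ℂ
          {T : H →L[ℂ] H | ∃ x y, T = toMUKernel.sliceFst x y}) : Set (H →L[ℂ] H))
  /-- `Ŝ_V` is the norm closure of the slices `(id ⊗ ω)(V)`, `ω ∈ L(H)_*` -/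
  Sh_slices : Set.range (fun x : Sh.carrier => ρ (ιSh x))
      = closure (↑(Submodule.span ℂ
          {T : H →L[ℂ] H | ∃ x y, T = toMUKernel.sliceSnd x y}) : Set (H →L[ℂ] H))
  /-- the tensor product of operators on `H⊗H` -/
  tmulB : (H →L[ℂ] H) → (H →L[ℂ] H) → (H2 →L[ℂ] H2)
  tmulB_spec : ∀ R T x y, tmulB R T (tp x y) = tp (R x) (T y)
  /-- the realization of `M(S⊗S)` on `H⊗H` -/
  ρ2S : hS.mS2.M.carrier →⋆ₙₐ[ℂ] (H2 →L[ℂ] H2)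
  ρ2S_ι : ∀ s u, ρ2S (hS.mS2.ι (hS.tS.tmul s u)) = tmulB (ρ (ιS s)) (ρ (ιS u))
  /-- well-behavedness: `Δ_V(s) = V (s⊗1) V*` -/
  ΔV : ∀ s, ρ2S (hS.Δ s) = V * tmulB (ρ (ιS s)) 1 * ContinuousLinearMap.adjoint V
  ρ2Sh : hSh.mS2.M.carrier →⋆ₙₐ[ℂ] (H2 →L[ℂ] H2)
  ρ2Sh_ι : ∀ x y, ρ2Sh (hSh.mS2.ι (hSh.tS.tmul x y)) = tmulB (ρ (ιSh x)) (ρ (ιSh y))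
  /-- well-behavedness: `Δ̂_V(x) = V* (1⊗x) V` -/
  ΔhV : ∀ x, ρ2Sh (hSh.Δ x) = ContinuousLinearMap.adjoint V * tmulB 1 (ρ (ιSh x)) * V

/-- Regularity of the multiplicative unitary (Baaj–Skandalis):
the slices `(id⊗ω)(ΣV)` span a dense subspace of `K(H)`. -/
def ReducedMU.Regular (W : ReducedMU.{u}) : Prop :=
  closure (↑(Submodule.span ℂ
      {T : W.H →L[ℂ] W.H | ∃ x y, T = W.toMUKernel.sliceSndSigV x y}) :
      Set (W.H →L[ℂ] W.H))
    = {T : W.H →L[ℂ] W.H | IsCompactOperator ⇑T}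

/-- Amenability of the multiplicative unitary in the sense of Baaj–Skandalis,
expressed by the existence of a bounded counit on the reduced algebra `S_V`. -/
def ReducedMU.Amenable (W : ReducedMU.{u}) : Prop :=
  ∃ (ε : W.S.carrier →⋆ₙₐ[ℂ] ℂ) (sl : W.hS.S2.carrier → W.S.carrier),
    (∀ z w, sl (z + w) = sl z + sl w) ∧
    (∀ (c : ℂ) z, sl (c • z) = c • sl z) ∧
    (∀ s u, sl (W.hS.tS.tmul s u) = ε s • u) ∧
    ε ≠ 0 ∧
    ∀ s u z, W.hS.Δ s * W.hS.inr u = W.hS.mS2.ι z → sl z = s * u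

/-- Ambient data for the reduced crossed products of a coaction `(σ, δ)` of the
reduced Hopf C*-algebra `S = S_V` on a correspondence `(X, A)`:
the tensor products `A⊗𝒦`, `X⊗𝒦`, their multiplier correspondence, the canonical
embeddings, and the strict extensions `δ_ι = (id⊗ι_S)‾∘δ`, `σ_ι = (id⊗ι_S)‾∘σ`. -/
structure CrossedSetup (W : ReducedMU.{u}) {A : CAlg.{u}} {X : Corr A}
    (cc : CorrCoaction W.hS X) where
  AK : CAlg.{u}
  tAK : CTensor A W.𝒦 AK
  mAK : MulAlg AK
  XK : CorrTensor X W.𝒦 tAK.toCTensorPre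
  mXK : MulCorr XK.Y mAK
  /-- the embedding `m ↦ 1_{M(A)} ⊗ m` of `M(𝒦)` into `M(A⊗𝒦)` -/
  inK : W.m𝒦.M.carrier →⋆ₙₐ[ℂ] mAK.M.carrier
  inK_one : inK W.m𝒦.one = mAK.one
  inK_spec : ∀ (m : W.m𝒦.M.carrier) (a : A.carrier) (k k' : W.𝒦.carrier),
      m * W.m𝒦.ι k = W.m𝒦.ι k' →
      inK m * mAK.ι (tAK.tmul a k) = mAK.ι (tAK.tmul a k')
  inK_spec' : ∀ (m : W.m𝒦.M.carrier) (a : A.carrier) (k k' : W.𝒦.carrier),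
      W.m𝒦.ι k * m = W.m𝒦.ι k' →
      mAK.ι (tAK.tmul a k) * inK m = mAK.ι (tAK.tmul a k')
  /-- the embedding `a ↦ a ⊗ 1` of `A` into `M(A⊗𝒦)` -/
  inA : A.carrier →⋆ₙₐ[ℂ] mAK.M.carrier
  inA_spec : ∀ a b k, inA a * mAK.ι (tAK.tmul b k) = mAK.ι (tAK.tmul (a * b) k)
  /-- the strict extension `(id_A ⊗ ι_S)‾ : M(A⊗S) → M(A⊗𝒦)` -/
  ιAext : cc.ac.mAS.M.carrier →⋆ₙₐ[ℂ] mAK.M.carrier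
  ιAext_one : ιAext cc.ac.mAS.one = mAK.one
  ιAext_spec : ∀ a s, ιAext (cc.ac.mAS.ι (cc.ac.tA.tmul a s)) = inA a * inK (W.ιS s)
  /-- the strict extension `(id_X ⊗ ι_S)‾ : M(X⊗S) → M(X⊗𝒦)` -/
  ιXext : cc.mXS.MX.carrier → mXK.MX.carrier
  ιXext_add : ∀ m n, ιXext (m + n) = ιXext m + ιXext n
  ιXext_csmul : ∀ (c : ℂ) m, ιXext (c • m) = c • ιXext m
  ιXext_smulR : ∀ m g, ιXext (cc.mXS.MX.smulR m g) = mXK.MX.smulR (ιXext m) (ιAext g)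
  ιXext_lact : ∀ g m, ιXext (cc.mXS.MX.lact g m) = mXK.MX.lact (ιAext g) (ιXext m)
  ιXext_inn : ∀ m n, mXK.MX.inn (ιXext m) (ιXext n) = ιAext (cc.mXS.MX.inn m n)
  ιXext_spec : ∀ (x : X.carrier) (s : W.S.carrier) (b : A.carrier) (k k' : W.𝒦.carrier),
      W.ιS s * W.m𝒦.ι k = W.m𝒦.ι k' →
      mXK.MX.smulR (ιXext (cc.mXS.ι (cc.XS.tmul x s))) (mAK.ι (tAK.tmul b k))
        = mXK.ι (XK.tmul (X.smulR x b) k')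

namespace CrossedSetup

variable {W : ReducedMU.{u}} {A : CAlg.{u}} {X : Corr A} {cc : CorrCoaction W.hS X}
variable (cs : CrossedSetup W cc)

/-- `δ_ι = (id_A ⊗ ι_S)‾ ∘ δ : A → M(A⊗𝒦)`. -/
def δι (a : A.carrier) : cs.mAK.M.carrier := cs.ιAext (cc.ac.δ a)

/-- `σ_ι = (id_X ⊗ ι_S)‾ ∘ σ : X → M(X⊗𝒦)`. -/
def σι (x : X.carrier) : cs.mXK.MX.carrier := cs.ιXext (cc.σ x)

/-- The reduced crossed product `A ⋊_δ Ŝ`: the closed linear span of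
`δ_ι(A)(1 ⊗ Ŝ)` inside `M(A⊗𝒦)`. -/
def CPA : Set cs.mAK.M.carrier :=
  closure (↑(Submodule.span ℂ
    {m : cs.mAK.M.carrier | ∃ a x, m = cs.δι a * cs.inK (W.ιSh x)}) :
    Set cs.mAK.M.carrier)

/-- The reduced crossed product `X ⋊_σ Ŝ`: the closed linear span of
`σ_ι(X)·(1 ⊗ Ŝ)` inside `M(X⊗𝒦)`. -/
def CPX : Set cs.mXK.MX.carrier :=
  closure (↑(Submodule.span ℂ
    {m : cs.mXK.MX.carrier | ∃ ξ x, m = cs.mXK.MX.smulR (cs.σι ξ) (cs.inK (W.ιSh x))}) :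
    Set cs.mXK.MX.carrier)

/-- The Katsura ideal `J_{X⋊_σŜ}` of the reduced crossed product correspondence. -/
def Jcp : Set cs.mAK.M.carrier := cs.mXK.MX.subKatsura cs.CPX cs.CPA

end CrossedSetup

/-- Data for the induced coaction `ζ` on the Cuntz–Pimsner algebra `O_X` and the
canonical representation `(k_X ⋊_σ id, k_A ⋊_δ id)` of `(X⋊_σŜ, A⋊_δŜ)` inside
`M(O_X ⊗ 𝒦)`, obtained from the strict extensions `((k_X⊗id_𝒦)‾, (k_A⊗id_𝒦)‾)`. -/
structure CrossedRep (W : ReducedMU.{u}) {A : CAlg.{u}} {X : Corr A}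
    (cc : CorrCoaction W.hS X) (𝒦X : Compacts X) (CP : CuntzPimsner 𝒦X)
    (cs : CrossedSetup W cc) where
  /-- `O_X ⊗ S` -/
  OS : CAlg.{u}
  tOS : CTensor CP.O W.S OS
  mOS : MulAlg OS
  /-- `k_A ⊗ id_S : A⊗S → O_X⊗S` -/
  kAS : cc.ac.AS.carrier →⋆ₙₐ[ℂ] OS.carrier
  kAS_spec : ∀ a s, kAS (cc.ac.tA.tmul a s) = tOS.tmul (CP.k.π a) s
  /-- the strict extension `(k_A⊗id_S)‾ : M(A⊗S) → M(O_X⊗S)` -/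
  kASbar : StrictExtAlg cc.ac.mAS mOS ((mOS.ι).comp kAS)
  /-- `k_X ⊗ id_S : X⊗S → O_X⊗S` -/
  kXS : cc.XS.Y.carrier → OS.carrier
  kXS_spec : ∀ x s, kXS (cc.XS.tmul x s) = tOS.tmul (CP.k.ψ x) s
  /-- the strict extension `(k_X⊗id_S)‾ : M_{A⊗S}(X⊗S) → M_{A⊗S}(O_X⊗S)` -/
  extS : CorrHomExt cc.ac.mAS cc.mXS mOS (fun z => mOS.ι (kXS z)) ((mOS.ι).comp kAS)
  /-- the induced coaction `ζ` of `S` on `O_X` -/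
  ζ : CP.O.carrier →⋆ₙₐ[ℂ] mOS.M.carrier
  ζ_π : ∀ a, ζ (CP.k.π a) = kASbar.bar (cc.ac.δ a)
  ζ_ψ : ∀ x, ζ (CP.k.ψ x) = extS.ψbar (cc.σ x)
  ζ_coaction : AlgCoactAux W.hS CP.O tOS mOS ζ
  /-- `O_X ⊗ 𝒦` -/
  OK : CAlg.{u}
  tOK : CTensor CP.O W.𝒦 OK
  mOK : MulAlg OK
  inKO : W.m𝒦.M.carrier →⋆ₙₐ[ℂ] mOK.M.carrier
  inKO_one : inKO W.m𝒦.one = mOK.one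
  inKO_spec : ∀ (m : W.m𝒦.M.carrier) (c : CP.O.carrier) (k k' : W.𝒦.carrier),
      m * W.m𝒦.ι k = W.m𝒦.ι k' →
      inKO m * mOK.ι (tOK.tmul c k) = mOK.ι (tOK.tmul c k')
  inO : CP.O.carrier →⋆ₙₐ[ℂ] mOK.M.carrier
  inO_spec : ∀ c c' k, inO c * mOK.ι (tOK.tmul c' k) = mOK.ι (tOK.tmul (c * c') k)
  /-- the strict extension `(id_{O_X} ⊗ ι_S)‾ : M(O_X⊗S) → M(O_X⊗𝒦)` -/
  ιOext : mOS.M.carrier →⋆ₙₐ[ℂ] mOK.M.carrier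
  ιOext_one : ιOext mOS.one = mOK.one
  ιOext_spec : ∀ c s, ιOext (mOS.ι (tOS.tmul c s)) = inO c * inKO (W.ιS s)
  /-- `k_A ⊗ id_𝒦 : A⊗𝒦 → O_X⊗𝒦` -/
  kAK : cs.AK.carrier →⋆ₙₐ[ℂ] OK.carrier
  kAK_spec : ∀ a k, kAK (cs.tAK.tmul a k) = tOK.tmul (CP.k.π a) k
  /-- `k_X ⊗ id_𝒦 : X⊗𝒦 → O_X⊗𝒦` -/
  kXK : cs.XK.Y.carrier → OK.carrier
  kXK_spec : ∀ x k, kXK (cs.XK.tmul x k) = tOK.tmul (CP.k.ψ x) k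
  /-- the strict extensions `((k_X⊗id_𝒦)‾, (k_A⊗id_𝒦)‾)` on the
  `(A⊗𝒦)`-multiplier correspondence -/
  extK : CorrHomExt cs.mAK cs.mXK mOK (fun z => mOK.ι (kXK z)) ((mOK.ι).comp kAK)
  /-- the map `ψ^{(1)}` induced on `K(X⋊_σŜ)` by the representation
  `(k_X⋊_σ id, k_A⋊_δ id)` -/
  ψ1 : (cs.mXK.MX.carrier →L[ℂ] cs.mXK.MX.carrier) → mOK.M.carrier
  ψ1_add : ∀ T T', T ∈ cs.mXK.MX.KSet cs.CPX → T' ∈ cs.mXK.MX.KSet cs.CPX →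
      ψ1 (T + T') = ψ1 T + ψ1 T'
  ψ1_csmul : ∀ (c : ℂ) T, T ∈ cs.mXK.MX.KSet cs.CPX → ψ1 (c • T) = c • ψ1 T
  ψ1_cont : ContinuousOn ψ1 (cs.mXK.MX.KSet cs.CPX)
  ψ1_θ : ∀ m n, m ∈ cs.CPX → n ∈ cs.CPX →
      ψ1 (cs.mXK.MX.rankOne m n) = extK.ψbar m * star (extK.ψbar n)

namespace CrossedRep

variable {W : ReducedMU.{u}} {A : CAlg.{u}} {X : Corr A} {cc : CorrCoaction W.hS X}
  {𝒦X : Compacts X} {CP : CuntzPimsner 𝒦X} {cs : CrossedSetup W cc}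
  (cr : CrossedRep W cc 𝒦X CP cs)

/-- `ζ_ι = (id_{O_X} ⊗ ι_S)‾ ∘ ζ`. -/
def ζι (c : CP.O.carrier) : cr.mOK.M.carrier := cr.ιOext (cr.ζ c)

/-- The reduced crossed product `O_X ⋊_ζ Ŝ` as a subset of `M(O_X⊗𝒦)`. -/
def CPO : Set cr.mOK.M.carrier :=
  closure (↑(Submodule.span ℂ
    {m : cr.mOK.M.carrier | ∃ c x, m = cr.ζι c * cr.inKO (W.ιSh x)}) :
    Set cr.mOK.M.carrier)

/-- Covariance of the representation `(k_X⋊_σ id, k_A⋊_δ id)` of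
`(X⋊_σŜ, A⋊_δŜ)` on `O_X⋊_ζŜ`. -/
def Covariant : Prop :=
  ∀ c ∈ cs.Jcp, ∀ T ∈ cs.mXK.MX.KSet cs.CPX,
    (∀ z ∈ cs.CPX, cs.mXK.MX.lact c z = T z) → cr.ψ1 T = cr.extK.πbar c

end CrossedRep

/-- A representation of a set-level sub-correspondence `(E, D)` of `(Y, B)`
on a C*-algebra `C`, together with the induced map on compacts. -/
structure SetRep {B : CAlg.{u}} (Y : Corr B) (E : Set Y.carrier) (D : Set B.carrier)
    (C : CAlg.{u}) where
  ψ : Y.carrier → C.carrier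
  π : B.carrier → C.carrier
  π_add : ∀ a b, a ∈ D → b ∈ D → π (a + b) = π a + π b
  π_csmul : ∀ (c : ℂ) a, a ∈ D → π (c • a) = c • π a
  π_mul : ∀ a b, a ∈ D → b ∈ D → π (a * b) = π a * π b
  π_star : ∀ a, a ∈ D → π (star a) = star (π a)
  ψ_add : ∀ x y, x ∈ E → y ∈ E → ψ (x + y) = ψ x + ψ y
  ψ_csmul : ∀ (c : ℂ) x, x ∈ E → ψ (c • x) = c • ψ x
  ψ_lact : ∀ a x, a ∈ D → x ∈ E → ψ (Y.lact a x) = π a * ψ x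
  ψ_inn : ∀ x y, x ∈ E → y ∈ E → π (Y.inn x y) = star (ψ x) * ψ y
  ψ1 : (Y.carrier →L[ℂ] Y.carrier) → C.carrier
  ψ1_θ : ∀ m n, m ∈ E → n ∈ E → ψ1 (Y.rankOne m n) = ψ m * star (ψ n)
  ψ1_add : ∀ T T', T ∈ Y.KSet E → T' ∈ Y.KSet E → ψ1 (T + T') = ψ1 T + ψ1 T'
  ψ1_csmul : ∀ (c : ℂ) T, T ∈ Y.KSet E → ψ1 (c • T) = c • ψ1 T
  ψ1_cont : ContinuousOn ψ1 (Y.KSet E)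

/-- Covariance of a set-level representation. -/
def SetRep.Covariant {B : CAlg.{u}} {Y : Corr B} {E : Set Y.carrier}
    {D : Set B.carrier} {C : CAlg.{u}} (r : SetRep Y E D C) : Prop :=
  ∀ a ∈ Y.subKatsura E D, ∀ T ∈ Y.KSet E,
    (∀ z ∈ E, Y.lact a z = T z) → r.ψ1 T = r.π a

/-- The Cuntz–Pimsner algebra of a set-level sub-correspondence `(E, D)`,
with its universal covariant representation. -/
structure SetCP {B : CAlg.{u}} (Y : Corr B) (E : Set Y.carrier) (D : Set B.carrier) where
  O : CAlg.{u}
  k : SetRep Y E D O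
  covariant : k.Covariant
  π_injective : ∀ a b, a ∈ D → b ∈ D → k.π a = k.π b → a = b
  generated : closure (↑(NonUnitalStarAlgebra.adjoin ℂ (k.ψ '' E ∪ k.π '' D)) :
      Set O.carrier) = Set.univ
  lift : ∀ {C : CAlg.{u}} (r : SetRep Y E D C), r.Covariant →
      (O.carrier →⋆ₙₐ[ℂ] C.carrier)
  lift_ψ : ∀ {C : CAlg.{u}} (r : SetRep Y E D C) (h : r.Covariant), ∀ x ∈ E,
      lift r h (k.ψ x) = r.ψ x
  lift_π : ∀ {C : CAlg.{u}} (r : SetRep Y E D C) (h : r.Covariant), ∀ a ∈ D,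
      lift r h (k.π a) = r.π a
  lift_unique : ∀ {C : CAlg.{u}} (r : SetRep Y E D C) (h : r.Covariant)
      (g : O.carrier →⋆ₙₐ[ℂ] C.carrier),
      (∀ x ∈ E, g (k.ψ x) = r.ψ x) → (∀ a ∈ D, g (k.π a) = r.π a) → g = lift r h



/-! A nondegenerate `ψ` with `ψ(a)*ψ(a') = π(a*a')` has the same Gram data as `π`, so
`π(a)b ↦ ψ(a)b` is a well-defined isometry between the dense subspaces `π(A)B` and `ψ(A)B`
of `B`. Its extension `U` preserves the `B`-valued inner product `x*y` and is onto, so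
`(U, x ↦ (U⁻¹x*)*)` is a double centralizer of `B`, i.e. a multiplier `v` with `ψ = vπ`.
Unitarity of `v` and the covariance `vπ(φ(a)) = φ̄'(π(a))v` then follow by cancelling against
the dense sets `π(A)B` and `ψ(A)B`. -/

end Paper

open MultiplierAlgebra

theorem star_mul_mul_congr {R : Type*} [NonUnitalRing R] [StarRing R]
    {u u' w w' : R} (h : star u * u' = star w * w') (x y : R) :
    star (u * x) * (u' * y) = star (w * x) * (w' * y) := by
  rw [star_mul, star_mul, mul_assoc, mul_assoc, ← mul_assoc (star u), ← mul_assoc (star w), h]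

theorem CStarRing.eq_of_forall_mul_left_eq {R : Type*} [NonUnitalNormedRing R] [StarRing R]
    [CStarRing R] {w w' : R} (h : ∀ z, z * w = z * w') : w = w' := by
  rw [← sub_eq_zero, ← CStarRing.star_mul_self_eq_zero_iff, mul_sub, h, sub_self]

theorem CStarRing.eq_of_forall_mul_right_eq {R : Type*} [NonUnitalNormedRing R] [StarRing R]
    [CStarRing R] {w w' : R} (h : ∀ z, w * z = w' * z) : w = w' := by
  rw [← sub_eq_zero, ← CStarRing.mul_star_self_eq_zero_iff, sub_mul, h, sub_self]

namespace DoubleCentralizer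

section CStarRing

variable {𝕜 A : Type*} [NontriviallyNormedField 𝕜] [NonUnitalNormedRing A] [StarRing A]
  [CStarRing A] [NormedSpace 𝕜 A] [SMulCommClass 𝕜 A A] [IsScalarTower 𝕜 A A]

theorem fst_mul (d : 𝓜(𝕜, A)) (a x : A) : d.fst (a * x) = d.fst a * x :=
  CStarRing.eq_of_forall_mul_left_eq fun z => by
    rw [← d.central, ← mul_assoc, d.central, mul_assoc]

theorem snd_mul (d : 𝓜(𝕜, A)) (a x : A) : d.snd (x * a) = x * d.snd a :=
  CStarRing.eq_of_forall_mul_right_eq fun z => by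
    rw [d.central, mul_assoc, ← d.central, mul_assoc]

theorem mul_coe (d : 𝓜(𝕜, A)) (a : A) : d * (a : 𝓜(𝕜, A)) = (d.fst a : 𝓜(𝕜, A)) := by
  ext x
  · simp [fst_mul]
  · simp [d.central]

theorem coe_mul (d : 𝓜(𝕜, A)) (a : A) : (a : 𝓜(𝕜, A)) * d = (d.snd a : 𝓜(𝕜, A)) := by
  ext x
  · simp [d.central]
  · simp [snd_mul]

variable (𝕜) in
theorem coe_injective : Function.Injective (DoubleCentralizer.coe 𝕜 : A → 𝓜(𝕜, A)) :=
  fun _ _ h => CStarRing.eq_of_forall_mul_left_eq fun z => by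
    simpa using congrArg (fun d : 𝓜(𝕜, A) => d.snd z) h

theorem eq_zero_of_forall_mul_coe_eq_zero {d : 𝓜(𝕜, A)}
    (h : ∀ a : A, d * (a : 𝓜(𝕜, A)) = 0) : d = 0 := by
  have hfst : ∀ a, d.fst a = 0 := fun a => coe_injective 𝕜 <| by
    rw [← mul_coe, h]
    ext <;> simp
  ext x
  · simp [hfst]
  · exact CStarRing.eq_of_forall_mul_right_eq fun z => by simp [d.central, hfst]

end CStarRing

variable {B : Type*} [NonUnitalCStarAlgebra B]

def ofUnitary (U : B ≃L[ℂ] B) (hU : ∀ x y, star (U x) * U y = star x * y) : 𝓜(ℂ, B) where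
  fst := U
  snd := LinearMap.mkContinuous
    { toFun := fun x => star (U.symm (star x))
      map_add' := fun x y => by simp only [star_add, map_add]
      map_smul' := fun c x => by simp [star_smul, map_smul] }
    ‖(U.symm : B →L[ℂ] B)‖ fun x => by
      rw [LinearMap.coe_mk, AddHom.coe_mk, norm_star, ← norm_star x]
      exact (U.symm : B →L[ℂ] B).le_opNorm (star x)
  central x y := by
    simpa using (hU (U.symm (star x)) y).symm

end DoubleCentralizer


namespace Paper

namespace MulAlg

variable {B : CAlg.{u}} (mB : MulAlg B)

def Nondegenerate {α : Type*} (f : α → mB.M.carrier) : Prop :=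
  closure (↑(Submodule.span ℂ {b : B.carrier | ∃ a b', mB.ι b = f a * mB.ι b'}) :
    Set B.carrier) = Set.univ

def mulL (m : mB.M.carrier) : B.carrier →L[ℂ] B.carrier :=
  have spec : ∀ b, mB.ι (mB.ideal_left m b).choose = m * mB.ι b := fun b =>
    (mB.ideal_left m b).choose_spec.symm
  LinearMap.mkContinuous
    { toFun := fun b => (mB.ideal_left m b).choose
      map_add' := fun b c => mB.injective <| by
        rw [spec, map_add mB.ι b c, mul_add, map_add, spec, spec]
      map_smul' := fun c b => mB.injective <| by
        rw [spec, map_smul mB.ι c b, mul_smul_comm, RingHom.id_apply, map_smul, spec] }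
    ‖m‖ fun b => by
      rw [LinearMap.coe_mk, AddHom.coe_mk, ← mB.isometry, spec, ← mB.isometry b]
      exact norm_mul_le _ _

theorem ι_mulL (m : mB.M.carrier) (b : B.carrier) : mB.ι (mB.mulL m b) = m * mB.ι b :=
  (mB.ideal_left m b).choose_spec.symm

theorem eq_of_forall_mul_ι_eq {m m' : mB.M.carrier} (h : ∀ b, m * mB.ι b = m' * mB.ι b) :
    m = m' :=
  sub_eq_zero.mp <| mB.essential _ fun b => by rw [sub_mul, h, sub_self]

variable {mB} {α : Type*} {f : α → mB.M.carrier}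

theorem Nondegenerate.eq_of_forall_mul_eq (hf : mB.Nondegenerate f) {m m' : mB.M.carrier}
    (h : ∀ a, m * f a = m' * f a) : m = m' := by
  have hL : mB.mulL m = mB.mulL m' := by
    refine ContinuousLinearMap.ext_on (dense_iff_closure_eq.mpr hf) ?_
    rintro b ⟨a, b', hb⟩
    apply mB.injective
    simp only [ι_mulL, hb, ← mul_assoc, h]
  exact mB.eq_of_forall_mul_ι_eq fun b => by rw [← ι_mulL, hL, ι_mulL]

theorem Nondegenerate.mul_left (hf : mB.Nondegenerate f) {u w : mB.M.carrier}
    (huw : u * w = mB.one) : mB.Nondegenerate (fun a => u * f a) := by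
  refine Set.eq_univ_of_forall fun b => ?_
  have hb : mB.mulL u (mB.mulL w b) = b :=
    mB.injective <| by rw [ι_mulL, ι_mulL, ← mul_assoc, huw, mB.one_mul]
  rw [← hb]
  refine map_mem_closure (mB.mulL u).continuous (hf ▸ Set.mem_univ _) fun c hc => ?_
  induction hc using Submodule.span_induction with
  | mem c hc =>
    obtain ⟨a, b', hc⟩ := hc
    exact Submodule.subset_span ⟨a, b', by rw [ι_mulL, hc, mul_assoc]⟩
  | zero => simp
  | add x y _ _ hx hy => rw [map_add]; exact add_mem hx hy
  | smul c x _ hx => rw [map_smul]; exact Submodule.smul_mem _ c hx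

theorem Nondegenerate.denseRange (hf : mB.Nondegenerate f) {E : Type*} [AddCommGroup E]
    [Module ℂ E] (e : E →ₗ[ℂ] B.carrier) (he : ∀ a b, mB.mulL (f a) b ∈ LinearMap.range e) :
    DenseRange e := by
  rw [DenseRange, ← LinearMap.coe_range]
  refine (dense_iff_closure_eq.mpr hf).mono <|
    SetLike.coe_subset_coe.mpr <| Submodule.span_le.mpr ?_
  rintro b ⟨a, b', hb⟩
  rw [show b = mB.mulL (f a) b' from mB.injective (by rw [ι_mulL, hb])]
  exact he a b'

variable (mB) in
theorem exists_starHom_doubleCentralizer :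
    ∃ h : 𝓜(ℂ, B.carrier) →⋆ₙₐ[ℂ] mB.M.carrier, ∀ b : B.carrier, h b = mB.ι b :=
  mB.largest (D := ⟨𝓜(ℂ, B.carrier)⟩) DoubleCentralizer.coeHom
    (DoubleCentralizer.coe_injective ℂ) (fun d a => ⟨_, DoubleCentralizer.mul_coe d a⟩)
    (fun d a => ⟨_, DoubleCentralizer.coe_mul d a⟩)
    (fun _ => DoubleCentralizer.eq_zero_of_forall_mul_coe_eq_zero)

variable (mB) in
theorem exists_mul_ι_eq_ι_apply (U : B.carrier ≃L[ℂ] B.carrier)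
    (hU : ∀ x y, star (U x) * U y = star x * y) :
    ∃ v : mB.M.carrier, ∀ b, v * mB.ι b = mB.ι (U b) := by
  obtain ⟨h, hh⟩ := mB.exists_starHom_doubleCentralizer
  refine ⟨h (DoubleCentralizer.ofUnitary U hU), fun b => ?_⟩
  rw [← hh, ← hh, ← map_mul, DoubleCentralizer.mul_coe]
  rfl

theorem exists_unitary_mulL_eq {g : α → mB.M.carrier}
    (hfg : ∀ a a', star (g a) * g a' = star (f a) * f a')
    (hf : mB.Nondegenerate f) (hg : mB.Nondegenerate g) :
    ∃ U : B.carrier ≃L[ℂ] B.carrier, (∀ a b, U (mB.mulL (f a) b) = mB.mulL (g a) b) ∧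
      ∀ x y, star (U x) * U y = star x * y := by
  let gen : α × B.carrier → B.carrier × B.carrier := fun p =>
    (mB.mulL (f p.1) p.2, mB.mulL (g p.1) p.2)
  let G := Submodule.span ℂ (Set.range gen)
  have hG : ∀ p ∈ G, ∀ q ∈ G, star p.2 * q.2 = star p.1 * q.1 := by
    intro p hp q hq
    induction hp, hq using Submodule.span_induction₂ with
    | mem_mem p q hp hq =>
      obtain ⟨⟨a, b⟩, rfl⟩ := hp
      obtain ⟨⟨a', b'⟩, rfl⟩ := hq
      apply mB.injective
      simp only [gen, map_mul, map_star, ι_mulL]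
      exact star_mul_mul_congr (hfg a a') _ _
    | zero_left => simp
    | zero_right => simp
    | add_left _ _ _ _ _ _ h₁ h₂ => simp [star_add, add_mul, h₁, h₂]
    | add_right _ _ _ _ _ _ h₁ h₂ => simp [mul_add, h₁, h₂]
    | smul_left _ _ _ _ _ h => simp [star_smul, smul_mul_assoc, h]
    | smul_right _ _ _ _ _ h => simp [mul_smul_comm, h]
  let e₁ : G →ₗ[ℂ] B.carrier := (LinearMap.fst ℂ _ _).comp G.subtype
  let e₂ : G →ₗ[ℂ] B.carrier := (LinearMap.snd ℂ _ _).comp G.subtype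
  have hgen : ∀ p, gen p ∈ G := fun p => Submodule.subset_span ⟨p, rfl⟩
  have hnorm : ∀ p : G, ‖e₂ p‖ = ‖e₁ p‖ := fun p => by
    rw [← mul_self_inj (norm_nonneg _) (norm_nonneg _), ← CStarRing.norm_star_mul_self,
      ← CStarRing.norm_star_mul_self]
    exact congrArg norm (hG p p.2 p p.2)
  have hd₁ : DenseRange e₁ := hf.denseRange e₁ fun a b => ⟨⟨_, hgen (a, b)⟩, rfl⟩
  have hd₂ : DenseRange e₂ := hg.denseRange e₂ fun a b => ⟨⟨_, hgen (a, b)⟩, rfl⟩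
  let U := (LinearEquiv.refl ℂ G).extend e₁ e₂ hd₁ ⟨1, fun p => (hnorm p).trans_le (by simp)⟩
    hd₂ ⟨1, fun p => (hnorm p).symm.trans_le (by simp)⟩
  have hU : ∀ p : G, U (e₁ p) = e₂ p := LinearEquiv.extend_eq _ _ _ _ _ _ _
  refine ⟨U, fun a b => hU ⟨_, hgen (a, b)⟩, fun x y => ?_⟩
  refine hd₁.induction_on₂ (p := fun x y => star (U x) * U y = star x * y)
    (isClosed_eq (by fun_prop) (by fun_prop)) (fun p q => ?_) x y
  rw [hU, hU]
  exact hG p p.2 q q.2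

end MulAlg

theorem phi_correspondence_homomorphisms_general
    (A B : CAlg.{u})
    (φ : A.carrier →⋆ₙₐ[ℂ] A.carrier)
    (mB : MulAlg B)
    -- the strict extension `φ̄'` of `φ'` to `M(B)`
    (φbar : mB.M.carrier →⋆ₙₐ[ℂ] mB.M.carrier)
    -- a nondegenerate homomorphism `π : A → M(B)`
    (π : A.carrier →⋆ₙₐ[ℂ] mB.M.carrier)
    (π_nondeg : closure (↑(Submodule.span ℂ
        {b : B.carrier | ∃ a b', mB.ι b = π a * mB.ι b'}) : Set B.carrier) = Set.univ) :
    -- (1) if `v ∈ M(B)` is a unitary intertwining `π∘φ` and `φ̄'∘π`, then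
    -- `ψ := v π(·)` is a nondegenerate correspondence homomorphism
    -- `(ψ, π) : (A(φ), A) → (M(B(φ')), M(B))`
    (∀ v : mB.M.carrier,
      star v * v = mB.one → v * star v = mB.one →
      (∀ a, v * π (φ a) = φbar (π a) * v) →
      -- `ψ` intertwines the left actions: `ψ(φ(a)a') = φ̄'(π(a)) ψ(a')`
      (∀ a a', v * π (φ a * a') = φbar (π a) * (v * π a')) ∧
      -- `ψ` preserves the inner products: `⟨ψ(a), ψ(a')⟩ = π(a* a')`
      (∀ a a', star (v * π a) * (v * π a') = π (star a * a')) ∧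
      -- `(ψ, π)` is nondegenerate: `ψ(A)·B` is dense in `B`
      closure (↑(Submodule.span ℂ
        {b : B.carrier | ∃ a b', mB.ι b = v * π a * mB.ι b'}) : Set B.carrier)
        = Set.univ) ∧
    -- (2) conversely, every nondegenerate correspondence homomorphism
    -- `(ψ, π) : (A(φ), A) → (M(B(φ')), M(B))` is of this form, for a unique
    -- such unitary `v`
    (∀ ψ : A.carrier → mB.M.carrier,
      (∀ a a', ψ (a + a') = ψ a + ψ a') →
      (∀ (c : ℂ) a, ψ (c • a) = c • ψ a) →
      (∀ a a', ψ (φ a * a') = φbar (π a) * ψ a') →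
      (∀ a a', star (ψ a) * ψ a' = π (star a * a')) →
      closure (↑(Submodule.span ℂ
        {b : B.carrier | ∃ a b', mB.ι b = ψ a * mB.ι b'}) : Set B.carrier)
        = Set.univ →
      ∃! v : mB.M.carrier,
        (star v * v = mB.one ∧ v * star v = mB.one) ∧
        (∀ a, v * π (φ a) = φbar (π a) * v) ∧
        (∀ a, ψ a = v * π a)) := by
  have hπ : mB.Nondegenerate π := π_nondeg
  refine ⟨fun v hv₁ hv₂ hvπ => ⟨fun a a' => ?_, fun a a' => ?_, hπ.mul_left hv₂⟩, ?_⟩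
  · rw [map_mul, ← mul_assoc, hvπ, mul_assoc]
  · rw [map_mul, map_star, star_mul, mul_assoc, ← mul_assoc (star v), hv₁, mB.one_mul]
  rintro ψ - - hψφ hψ (hψ_nondeg : mB.Nondegenerate ψ)
  have hinn : ∀ a a', star (ψ a) * ψ a' = star (π a) * π a' := fun a a' => by
    rw [hψ, map_mul, map_star]
  obtain ⟨U, hUπ, hU⟩ := MulAlg.exists_unitary_mulL_eq hinn hπ hψ_nondeg
  obtain ⟨v, hv⟩ := mB.exists_mul_ι_eq_ι_apply U hU
  have hψv : ∀ a, ψ a = v * π a := fun a => mB.eq_of_forall_mul_ι_eq fun b => by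
    rw [← MulAlg.ι_mulL, ← hUπ, ← hv, MulAlg.ι_mulL, mul_assoc]
  have hv_adj : ∀ a, star v * ψ a = π a := fun a => star_injective <| by
    rw [star_mul, star_star]
    exact hπ.eq_of_forall_mul_eq fun a' => by rw [mul_assoc, ← hψv, hinn]
  have hv₁ : star v * v = mB.one := hπ.eq_of_forall_mul_eq fun a => by
    rw [mB.one_mul, mul_assoc, ← hψv, hv_adj]
  have hv₂ : v * star v = mB.one := hψ_nondeg.eq_of_forall_mul_eq fun a => by
    rw [mB.one_mul, mul_assoc, hv_adj, hψv]
  have hvπ : ∀ a, v * π (φ a) = φbar (π a) * v := fun a => hπ.eq_of_forall_mul_eq fun a' => by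
    rw [mul_assoc, ← map_mul, ← hψv, hψφ, hψv, mul_assoc]
  refine ⟨v, ⟨⟨hv₁, hv₂⟩, hvπ, hψv⟩, fun v' ⟨_, _, hψv'⟩ => ?_⟩
  exact hπ.eq_of_forall_mul_eq fun a => by rw [← hψv', hψv]

/-- Let `φ` and `φ'` be automorphisms of C*-algebras `A` and `B`,
`π : A → M(B)` a nondegenerate homomorphism, and `v ∈ M(B)` a unitary with
`vπ(φ(a)) = φ̄'(π(a))v` for all `a`.  Then `ψ(a) := vπ(a)` defines a nondegenerate
correspondence homomorphism `(ψ, π) : (A(φ), A) → (M(B(φ')), M(B))`, where the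
`φ`-correspondence `A(φ)` is the Hilbert module `A` (`⟨a,b⟩ = a*b`) with left
action `a·b := φ(a)b`, and `M(B(φ'))` is the `φ̄'`-correspondence `M(B)(φ̄')`.
Conversely, every nondegenerate correspondence homomorphism
`(ψ, π) : (A(φ), A) → (M(B(φ')), M(B))` is of this form for a unique such
unitary `v`. -/
theorem phi_correspondence_homomorphisms
    (A B : CAlg.{u})
    (φ : A.carrier →⋆ₙₐ[ℂ] A.carrier) (hφ : Function.Bijective φ)
    (φ' : B.carrier →⋆ₙₐ[ℂ] B.carrier) (hφ' : Function.Bijective φ')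
    (mB : MulAlg B)
    -- the strict extension `φ̄'` of `φ'` to `M(B)`
    (φbar : mB.M.carrier →⋆ₙₐ[ℂ] mB.M.carrier)
    (φbar_ι : ∀ b, φbar (mB.ι b) = mB.ι (φ' b))
    (φbar_one : φbar mB.one = mB.one)
    -- a nondegenerate homomorphism `π : A → M(B)`
    (π : A.carrier →⋆ₙₐ[ℂ] mB.M.carrier)
    (π_nondeg : closure (↑(Submodule.span ℂ
        {b : B.carrier | ∃ a b', mB.ι b = π a * mB.ι b'}) : Set B.carrier) = Set.univ) :
    -- (1) if `v ∈ M(B)` is a unitary intertwining `π∘φ` and `φ̄'∘π`, then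
    -- `ψ := v π(·)` is a nondegenerate correspondence homomorphism
    -- `(ψ, π) : (A(φ), A) → (M(B(φ')), M(B))`
    (∀ v : mB.M.carrier,
      star v * v = mB.one → v * star v = mB.one →
      (∀ a, v * π (φ a) = φbar (π a) * v) →
      -- `ψ` intertwines the left actions: `ψ(φ(a)a') = φ̄'(π(a)) ψ(a')`
      (∀ a a', v * π (φ a * a') = φbar (π a) * (v * π a')) ∧
      -- `ψ` preserves the inner products: `⟨ψ(a), ψ(a')⟩ = π(a* a')`
      (∀ a a', star (v * π a) * (v * π a') = π (star a * a')) ∧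
      -- `(ψ, π)` is nondegenerate: `ψ(A)·B` is dense in `B`
      closure (↑(Submodule.span ℂ
        {b : B.carrier | ∃ a b', mB.ι b = v * π a * mB.ι b'}) : Set B.carrier)
        = Set.univ) ∧
    -- (2) conversely, every nondegenerate correspondence homomorphism
    -- `(ψ, π) : (A(φ), A) → (M(B(φ')), M(B))` is of this form, for a unique
    -- such unitary `v`
    (∀ ψ : A.carrier → mB.M.carrier,
      (∀ a a', ψ (a + a') = ψ a + ψ a') →
      (∀ (c : ℂ) a, ψ (c • a) = c • ψ a) →
      (∀ a a', ψ (φ a * a') = φbar (π a) * ψ a') →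
      (∀ a a', star (ψ a) * ψ a' = π (star a * a')) →
      closure (↑(Submodule.span ℂ
        {b : B.carrier | ∃ a b', mB.ι b = ψ a * mB.ι b'}) : Set B.carrier)
        = Set.univ →
      ∃! v : mB.M.carrier,
        (star v * v = mB.one ∧ v * star v = mB.one) ∧
        (∀ a, v * π (φ a) = φbar (π a) * v) ∧
        (∀ a, ψ a = v * π a)) :=
  phi_correspondence_homomorphisms_general A B φ mB φbar π π_nondeg

end Paper
end
end

section
/- Let (X,A) be a nondegenerate C*-correspondence. Then the Katsura ideal of the A-multiplier correspondence satisfies J_{M_A(X)} ⊆ M(A; J_X), the strict closure of J_X in M(A). -/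
noncomputable section
namespace Paper

universe u

/-!
Let `m ∈ J_{M_A(X)}` and `a ∈ A`, and put `b = m a ∈ A` (the case `a m` is symmetric).
If `c ∈ ker φ_A` then `φ(c)` also kills `M_A(X)`, because `M_A(X)·A ⊆ X` and elements of `M(X)`
are determined by their products with `A`; hence `m c' = 0` for `c' = a c`, i.e. `b c = 0`.
For compactness, `φ(m)` agrees on `M_A(X)` with a norm limit `T` of combinations of `θ_{p,q}`,
`p, q ∈ M_A(X)`, so `φ(b) = T ∘ φ(a)` on `X`. Now `θ_{p,q} ∘ φ(a) = θ_{p,q'}` with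
`q' = φ(a*) q ∈ X`, and `x ↦ p⟨q', x⟩` is the norm limit of `θ_{p u*, q'} ∈ K(X)` as `q' u → q'`
along an approximate unit of `A`. Finally `K(X)` is closed in operator norm, since it embeds
isometrically (an injective *-homomorphism) into the C*-algebra of adjointable operators.
-/

namespace HMod

variable {A : CAlg.{u}} (X : HMod A)

lemma inn_zero_right (x : X.carrier) : X.inn x 0 = 0 :=
  (AddMonoidHom.mk' (X.inn x) (X.inn_add_right x)).map_zero

lemma inn_sub_right (x y z : X.carrier) : X.inn x (y - z) = X.inn x y - X.inn x z :=
  (AddMonoidHom.mk' (X.inn x) (X.inn_add_right x)).map_sub y z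

lemma inn_zero_left (x : X.carrier) : X.inn 0 x = 0 := by
  rw [← X.inn_star, inn_zero_right, star_zero]

lemma inn_add_left (x y z : X.carrier) : X.inn (x + y) z = X.inn x z + X.inn y z := by
  rw [← X.inn_star, X.inn_add_right, star_add, X.inn_star, X.inn_star]

lemma inn_sub_left (x y z : X.carrier) : X.inn (x - y) z = X.inn x z - X.inn y z := by
  rw [← X.inn_star, inn_sub_right, star_sub, X.inn_star, X.inn_star]

lemma inn_smulR_left (x y : X.carrier) (a : A.carrier) :
    X.inn (X.smulR x a) y = star a * X.inn x y := by
  rw [← X.inn_star, X.inn_smulR, star_mul, X.inn_star]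

lemma smulR_sub (x : X.carrier) (a b : A.carrier) :
    X.smulR x (a - b) = X.smulR x a - X.smulR x b :=
  (AddMonoidHom.mk' (X.smulR x) (X.smulR_add x)).map_sub a b

lemma zero_smulR (a : A.carrier) : X.smulR 0 a = 0 :=
  (AddMonoidHom.mk' (X.smulR · a) (X.add_smulR · · a)).map_zero

lemma sub_smulR (x y : X.carrier) (a : A.carrier) :
    X.smulR (x - y) a = X.smulR x a - X.smulR y a :=
  (AddMonoidHom.mk' (X.smulR · a) (X.add_smulR · · a)).map_sub x y

lemma norm_mul_self (x : X.carrier) : ‖x‖ * ‖x‖ = ‖X.inn x x‖ := by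
  rw [X.norm_eq x]; exact Real.mul_self_sqrt (norm_nonneg _)

lemma eq_zero_of_inn_self_eq_zero {x : X.carrier} (h : X.inn x x = 0) : x = 0 := by
  rw [← norm_eq_zero, X.norm_eq, h, norm_zero, Real.sqrt_zero]

lemma ext_inn_right {x y : X.carrier} (h : ∀ z, X.inn x z = X.inn y z) : x = y := by
  rw [← sub_eq_zero]
  exact X.eq_zero_of_inn_self_eq_zero (by rw [inn_sub_left, h, sub_self])

lemma continuous_inn_right (x : X.carrier) : Continuous (X.inn x) :=
  AddMonoidHomClass.continuous_of_bound (AddMonoidHom.mk' (X.inn x) (X.inn_add_right x)) ‖x‖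
    (X.norm_inn_le x)

lemma continuous_inn_left (y : X.carrier) : Continuous (X.inn · y) := by
  simp_rw [← X.inn_star y]
  exact continuous_star.comp (X.continuous_inn_right y)

/-- With `y = x - x·a` one has `⟨y, y⟩ = ⟨y, x⟩ - ⟨y, x⟩a` and `‖⟨y, x⟩‖ = ‖⟨x, x⟩a - ⟨x, x⟩‖`,
which is small for `a` far along an approximate unit of `A` (taken in the spectral order). -/
lemma exists_norm_sub_smulR_lt (x : X.carrier) {ε : ℝ} (hε : 0 < ε) :
    ∃ a : A.carrier, ‖x - X.smulR x a‖ < ε := by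
  let := CStarAlgebra.spectralOrder A.carrier
  have := CStarAlgebra.spectralOrderedRing A.carrier
  have hl := CStarAlgebra.increasingApproximateUnit A.carrier
  have hlim := (hl.tendsto_mul_left (X.inn x x)).sub_const (X.inn x x)
  rw [sub_self, tendsto_zero_iff_norm_tendsto_zero] at hlim
  have hsmall := hlim.eventually (gt_mem_nhds (show (0 : ℝ) < ε ^ 2 / 2 by positivity))
  obtain ⟨a, ha_small, ha_norm⟩ := (hsmall.and hl.eventually_norm).exists
  refine ⟨a, lt_of_pow_lt_pow_left₀ 2 hε.le ?_⟩
  set y := x - X.smulR x a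
  have hyy : X.inn y y = X.inn y x - X.inn y x * a := by
    rw [X.inn_sub_right, X.inn_smulR]
  have hyx : ‖X.inn y x‖ = ‖X.inn x x * a - X.inn x x‖ := by
    rw [← X.inn_star, norm_star, X.inn_sub_right, X.inn_smulR, norm_sub_rev]
  calc ‖y‖ ^ 2 = ‖X.inn y x - X.inn y x * a‖ := by rw [sq, X.norm_mul_self, hyy]
    _ ≤ ‖X.inn y x‖ + ‖X.inn y x‖ * ‖a‖ :=
        (norm_sub_le _ _).trans (by gcongr; exact norm_mul_le _ _)
    _ ≤ 2 * ‖X.inn x x * a - X.inn x x‖ := by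
        rw [hyx]; nlinarith [norm_nonneg (X.inn x x * a - X.inn x x)]
    _ < ε ^ 2 := by linarith

lemma continuous_of_inn_eq (T S : X.carrier →ₗ[ℂ] X.carrier)
    (h : ∀ x y, X.inn (T x) y = X.inn x (S y)) : Continuous T := by
  refine T.continuous_of_seq_closed_graph fun u x y hu hTu => X.ext_inn_right fun z => ?_
  have hlim₁ := ((X.continuous_inn_left z).tendsto y).comp hTu
  have hlim₂ := ((X.continuous_inn_left (S z)).tendsto x).comp hu
  simp only [Function.comp_def, h] at hlim₁
  rw [h, tendsto_nhds_unique hlim₁ hlim₂]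

def IsAdjointPair (T S : X.carrier →L[ℂ] X.carrier) : Prop :=
  ∀ x y, X.inn (T x) y = X.inn x (S y)

variable {X}

namespace IsAdjointPair

lemma symm {T S} (h : X.IsAdjointPair T S) : X.IsAdjointPair S T := fun x y => by
  rw [← X.inn_star, ← h, X.inn_star]

lemma unique {T S S'} (h : X.IsAdjointPair T S) (h' : X.IsAdjointPair T S') : S = S' :=
  ContinuousLinearMap.ext fun y => X.ext_inn_right fun z => by
    rw [h.symm, h'.symm]

lemma norm_le {T S} (h : X.IsAdjointPair T S) : ‖S‖ ≤ ‖T‖ := by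
  refine S.opNorm_le_bound (norm_nonneg T) fun y => ?_
  have key : ‖S y‖ * ‖S y‖ ≤ ‖y‖ * (‖T‖ * ‖S y‖) := by
    rw [X.norm_mul_self, h.symm]
    exact (X.norm_inn_le _ _).trans (by gcongr; exact T.le_opNorm _)
  rcases (norm_nonneg (S y)).eq_or_lt with h0 | hpos
  · rw [← h0]; positivity
  · nlinarith

lemma zero : X.IsAdjointPair 0 0 := fun x y => by
  simp [X.inn_zero_left, X.inn_zero_right]

lemma add {T S T' S'} (h : X.IsAdjointPair T S) (h' : X.IsAdjointPair T' S') :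
    X.IsAdjointPair (T + T') (S + S') := fun x y => by
  simp only [add_apply, X.inn_add_left, X.inn_add_right, h x y, h' x y]

lemma sub {T S T' S'} (h : X.IsAdjointPair T S) (h' : X.IsAdjointPair T' S') :
    X.IsAdjointPair (T - T') (S - S') := fun x y => by
  simp only [sub_apply, X.inn_sub_left, X.inn_sub_right, h x y, h' x y]

lemma mul {T S T' S'} (h : X.IsAdjointPair T S) (h' : X.IsAdjointPair T' S') :
    X.IsAdjointPair (T * T') (S' * S) := fun x y => by
  show X.inn (T (T' x)) y = X.inn x (S' (S y))
  rw [h, h']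

lemma smul {T S} (h : X.IsAdjointPair T S) (c : ℂ) :
    X.IsAdjointPair (c • T) (star c • S) := fun x y => by
  rw [smul_apply, smul_apply, ← X.inn_star, X.inn_csmul_right, star_smul, X.inn_star,
    X.inn_csmul_right, h]

end IsAdjointPair

variable (X)

/-- The adjointable operators `L(X)`. -/
def adjointable : NonUnitalSubalgebra ℂ (X.carrier →L[ℂ] X.carrier) where
  carrier := {T | ∃ S, X.IsAdjointPair T S}
  zero_mem' := ⟨0, .zero⟩
  add_mem' := fun ⟨S, h⟩ ⟨S', h'⟩ => ⟨S + S', h.add h'⟩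
  mul_mem' := fun ⟨S, h⟩ ⟨S', h'⟩ => ⟨S' * S, h.mul h'⟩
  smul_mem' := fun c _ ⟨S, h⟩ => ⟨star c • S, h.smul c⟩

namespace adjointable

instance : Star X.adjointable where
  star T := ⟨T.2.choose, T.1, T.2.choose_spec.symm⟩

variable {X}

lemma isAdjointPair_star (T : X.adjointable) : X.IsAdjointPair T (star T : X.adjointable) :=
  T.2.choose_spec

lemma coe_star_eq {T : X.adjointable} {S} (h : X.IsAdjointPair T S) :
    ((star T : X.adjointable) : X.carrier →L[ℂ] X.carrier) = S :=
  (isAdjointPair_star T).unique h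

variable (X)

instance : StarRing X.adjointable where
  star_involutive T := Subtype.ext <| coe_star_eq (isAdjointPair_star T).symm
  star_mul T U := Subtype.ext <| coe_star_eq ((isAdjointPair_star T).mul (isAdjointPair_star U))
  star_add T U := Subtype.ext <| coe_star_eq ((isAdjointPair_star T).add (isAdjointPair_star U))

instance : StarModule ℂ X.adjointable where
  star_smul c T := Subtype.ext <| coe_star_eq ((isAdjointPair_star T).smul c)

/-- `‖T x‖² = ‖⟨x, T*T x⟩‖ ≤ ‖T*T‖ ‖x‖²`. -/
instance : CStarRing X.adjointable where
  norm_mul_self_le T := by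
    set M : X.carrier →L[ℂ] X.carrier := (star T * T : X.adjointable).1
    have hM : 0 ≤ ‖M‖ := norm_nonneg _
    have key : ∀ x, ‖T.1 x‖ ≤ Real.sqrt ‖M‖ * ‖x‖ := fun x => by
      have hsq : ‖T.1 x‖ * ‖T.1 x‖ ≤ ‖M‖ * (‖x‖ * ‖x‖) := by
        rw [X.norm_mul_self, isAdjointPair_star T]
        calc ‖X.inn x (M x)‖ ≤ ‖x‖ * (‖M‖ * ‖x‖) :=
              (X.norm_inn_le _ _).trans (by gcongr; exact M.le_opNorm x)
          _ = ‖M‖ * (‖x‖ * ‖x‖) := by ring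
      rw [← Real.sqrt_mul_self (norm_nonneg (T.1 x)), ← Real.sqrt_mul_self (norm_nonneg x),
        ← Real.sqrt_mul hM]
      exact Real.sqrt_le_sqrt hsq
    have hT : ‖T‖ ≤ Real.sqrt ‖M‖ := T.1.opNorm_le_bound (Real.sqrt_nonneg _) key
    calc ‖T‖ * ‖T‖ ≤ Real.sqrt ‖M‖ * Real.sqrt ‖M‖ := mul_self_le_mul_self (norm_nonneg _) hT
      _ = ‖star T * T‖ := Real.mul_self_sqrt hM

/-- A limit `T` of adjointable operators `Tₙ` is adjointable: the adjoints `Tₙ*` are Cauchy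
since `‖Tₙ* - Tₘ*‖ ≤ ‖Tₙ - Tₘ‖`, and their limit is an adjoint of `T`. -/
lemma isClosed : IsClosed (X.adjointable : Set (X.carrier →L[ℂ] X.carrier)) := by
  refine IsSeqClosed.isClosed fun T T₀ hT hlim => ?_
  choose S hS using hT
  have hcauchy : CauchySeq S := by
    refine Metric.cauchySeq_iff.mpr fun ε hε => ?_
    obtain ⟨N, hN⟩ := Metric.cauchySeq_iff.mp hlim.cauchySeq ε hε
    refine ⟨N, fun n hn m hm => ?_⟩
    rw [dist_eq_norm]
    exact ((hS n).sub (hS m)).norm_le.trans_lt (by rw [← dist_eq_norm]; exact hN n hn m hm)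
  obtain ⟨S₀, hS₀⟩ := cauchySeq_tendsto_of_complete hcauchy
  refine ⟨S₀, fun x y => tendsto_nhds_unique (f := fun n => X.inn (T n x) y) (l := .atTop) ?_ ?_⟩
  · exact (((X.continuous_inn_left y).comp (continuous_eval_const x)).tendsto T₀).comp hlim
  · refine ((((X.continuous_inn_right x).comp (continuous_eval_const y)).tendsto S₀).comp
      hS₀).congr fun n => ?_
    exact (hS n x y).symm

instance : CompleteSpace X.adjointable := (isClosed X).completeSpace_coe

instance : NonUnitalCStarAlgebra X.adjointable where
  norm_smul_le c T := norm_smul_le c T.1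

end adjointable

end HMod

namespace Corr

variable {A : CAlg.{u}} (X : Corr A)

lemma lact_zero (a : A.carrier) : X.lact a 0 = 0 :=
  (AddMonoidHom.mk' (X.lact a) (X.lact_add a)).map_zero

def lactCLM (a : A.carrier) : X.carrier →L[ℂ] X.carrier :=
  LinearMap.mkContinuous
    { toFun := X.lact a
      map_add' := X.lact_add a
      map_smul' := X.lact_csmul a } ‖a‖ (X.norm_lact_le a)

lemma lactCLM_apply (a : A.carrier) (x : X.carrier) : X.lactCLM a x = X.lact a x := rfl

lemma rankOne_apply (m n z : X.carrier) : X.rankOne m n z = X.smulR m (X.inn n z) := rfl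

lemma norm_rankOne_le (m n : X.carrier) : ‖X.rankOne m n‖ ≤ ‖m‖ * ‖n‖ :=
  LinearMap.mkContinuous_norm_le _ (by positivity) _

lemma rankOne_sub_left (m m' n : X.carrier) :
    X.rankOne (m - m') n = X.rankOne m n - X.rankOne m' n :=
  ContinuousLinearMap.ext fun _ => X.sub_smulR _ _ _

lemma rankOne_sub_right (m n n' : X.carrier) :
    X.rankOne m (n - n') = X.rankOne m n - X.rankOne m n' :=
  ContinuousLinearMap.ext fun _ => by
    simp only [sub_apply, rankOne_apply, X.inn_sub_left, X.smulR_sub]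

lemma map_mem_of_mem_KSet {G : Type*} [NormedAddCommGroup G] [NormedSpace ℂ G]
    {E : Set X.carrier} (F : (X.carrier →L[ℂ] X.carrier) →L[ℂ] G) {C : Submodule ℂ G}
    (hC : IsClosed (C : Set G))
    (hF : ∀ p ∈ E, ∀ q ∈ E, F (X.rankOne p q) ∈ C) {T : X.carrier →L[ℂ] X.carrier}
    (hT : T ∈ X.KSet E) : F T ∈ C := by
  have hspan : Submodule.span ℂ {T | ∃ p ∈ E, ∃ q ∈ E, T = X.rankOne p q}
      ≤ C.comap F.toLinearMap :=
    Submodule.span_le.mpr (by rintro _ ⟨p, hp, q, hq, rfl⟩; exact hF p hp q hq)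
  exact closure_minimal hspan (hC.preimage F.continuous) hT

end Corr

namespace Compacts

variable {A : CAlg.{u}} {X : Corr A} (𝒦 : Compacts X)

lemma act_zero_left (x : X.carrier) : 𝒦.act 0 x = 0 :=
  (AddMonoidHom.mk' (𝒦.act · x) (𝒦.add_act · · x)).map_zero

lemma act_sub_left (k l : 𝒦.K.carrier) (x : X.carrier) :
    𝒦.act (k - l) x = 𝒦.act k x - 𝒦.act l x :=
  (AddMonoidHom.mk' (𝒦.act · x) (𝒦.add_act · · x)).map_sub k l

def actₗ (k : 𝒦.K.carrier) : X.carrier →ₗ[ℂ] X.carrier where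
  toFun := 𝒦.act k
  map_add' := 𝒦.act_add k
  map_smul' := 𝒦.act_csmul k

def actCLM (k : 𝒦.K.carrier) : X.carrier →L[ℂ] X.carrier :=
  ⟨𝒦.actₗ k, X.continuous_of_inn_eq (𝒦.actₗ k) (𝒦.actₗ (star k)) (𝒦.act_adjoint k)⟩

lemma actCLM_apply (k : 𝒦.K.carrier) (x : X.carrier) : 𝒦.actCLM k x = 𝒦.act k x := rfl

def actHom : 𝒦.K.carrier →⋆ₙₐ[ℂ] X.adjointable where
  toFun k := ⟨𝒦.actCLM k, 𝒦.actCLM (star k), 𝒦.act_adjoint k⟩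
  map_add' k l := Subtype.ext <| ContinuousLinearMap.ext (𝒦.add_act k l)
  map_smul' c k := Subtype.ext <| ContinuousLinearMap.ext (𝒦.csmul_act c k)
  map_zero' := Subtype.ext <| ContinuousLinearMap.ext 𝒦.act_zero_left
  map_mul' k l := Subtype.ext <| ContinuousLinearMap.ext (𝒦.act_mul k l)
  map_star' k := Subtype.ext <| .symm <| HMod.adjointable.coe_star_eq
    (T := ⟨𝒦.actCLM k, 𝒦.actCLM (star k), 𝒦.act_adjoint k⟩) (𝒦.act_adjoint k)

lemma actHom_injective : Function.Injective 𝒦.actHom := fun k l h =>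
  sub_eq_zero.mp <| 𝒦.act_injective _ fun x => by
    rw [act_sub_left, sub_eq_zero]
    exact congrArg (fun T : X.adjointable => T.1 x) h

lemma norm_actCLM (k : 𝒦.K.carrier) : ‖𝒦.actCLM k‖ = ‖k‖ :=
  NonUnitalStarAlgHom.norm_map 𝒦.actHom 𝒦.actHom_injective k

end Compacts

namespace MulCorr

variable {A : CAlg.{u}} {X : Corr A} {mA : MulAlg A} (mX : MulCorr X mA)

def ιₗᵢ : X.carrier →ₗᵢ[ℂ] mX.MX.carrier where
  toFun := mX.ι
  map_add' := mX.ι_add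
  map_smul' := mX.ι_csmul
  norm_map' := mX.ι_isometry

def ιL : X.carrier →L[ℂ] mX.MX.carrier := mX.ιₗᵢ.toContinuousLinearMap

lemma ιL_apply (x : X.carrier) : mX.ιL x = mX.ι x := rfl

lemma ι_sub (x y : X.carrier) : mX.ι (x - y) = mX.ι x - mX.ι y := mX.ιₗᵢ.map_sub x y

lemma norm_comp_ιL_le (T : mX.MX.carrier →L[ℂ] mX.MX.carrier) : ‖T ∘L mX.ιL‖ ≤ ‖T‖ :=
  (T.opNorm_comp_le _).trans <| mul_le_of_le_one_right (norm_nonneg T)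
    mX.ιₗᵢ.norm_toContinuousLinearMap_le

lemma ι_mem_MA (x : X.carrier) : mX.ι x ∈ mX.MA := by
  rintro _ ⟨a, rfl⟩
  exact ⟨⟨X.lact a x, (mX.ι_lact a x).symm⟩, ⟨X.smulR x a, (mX.ι_smulR x a).symm⟩⟩

lemma lact_ι_eq_zero_of_mem_MA {c : A.carrier} (hc : ∀ x, X.lact c x = 0) {z : mX.MX.carrier}
    (hz : z ∈ mX.MA) : mX.MX.lact (mA.ι c) z = 0 := by
  refine mX.essential _ 0 fun a => ?_
  obtain ⟨x, hx⟩ := (hz (mA.ι a) ⟨a, rfl⟩).2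
  rw [mX.MX.zero_smulR, ← mX.MX.lact_smulR, ← hx, mX.ι_lact, hc]
  exact mX.ιₗᵢ.map_zero

section Compacts

variable (𝒦 : Compacts X)

/-- `K(X)` inside `L(X, M(X))`, where the restrictions to `X` of operators on `M(X)` live. -/
def compactsEmb : 𝒦.K.carrier →ₗ[ℂ] (X.carrier →L[ℂ] mX.MX.carrier) where
  toFun k := mX.ιL ∘L 𝒦.actCLM k
  map_add' k l := ContinuousLinearMap.ext fun x => by
    simp only [ContinuousLinearMap.comp_apply, add_apply, Compacts.actCLM_apply, 𝒦.add_act,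
      map_add]
  map_smul' c k := ContinuousLinearMap.ext fun x => by
    simp only [ContinuousLinearMap.comp_apply, smul_apply, Compacts.actCLM_apply, 𝒦.csmul_act,
      map_smul, RingHom.id_apply]

lemma compactsEmb_apply (k : 𝒦.K.carrier) (x : X.carrier) :
    mX.compactsEmb 𝒦 k x = mX.ι (𝒦.act k x) := rfl

lemma isClosed_range_compactsEmb :
    IsClosed (LinearMap.range (mX.compactsEmb 𝒦) : Set (X.carrier →L[ℂ] mX.MX.carrier)) := by
  have hiso : Isometry (mX.compactsEmb 𝒦) := AddMonoidHomClass.isometry_of_norm _ fun k => by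
    rw [compactsEmb, LinearMap.coe_mk, AddHom.coe_mk, ιL,
      LinearIsometry.norm_toContinuousLinearMap_comp, Compacts.norm_actCLM]
  exact hiso.isClosedEmbedding.isClosed_range

lemma mem_range_compactsEmb_of_approx {S : X.carrier →L[ℂ] mX.MX.carrier}
    (h : ∀ ε > 0, ∃ k, ‖S - mX.compactsEmb 𝒦 k‖ < ε) :
    S ∈ LinearMap.range (mX.compactsEmb 𝒦) := by
  rw [← SetLike.mem_coe, ← (mX.isClosed_range_compactsEmb 𝒦).closure_eq, Metric.mem_closure_iff]
  intro ε hε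
  obtain ⟨k, hk⟩ := h ε hε
  exact ⟨_, ⟨k, rfl⟩, by rwa [dist_eq_norm]⟩

lemma exists_act_eq_lact {b : A.carrier}
    (hb : mX.ιL ∘L X.lactCLM b ∈ LinearMap.range (mX.compactsEmb 𝒦)) :
    ∃ k, ∀ x, 𝒦.act k x = X.lact b x := by
  obtain ⟨k, hk⟩ := hb
  exact ⟨k, fun x => mX.ι_injective (congrArg (· x) hk)⟩

/-- `x ↦ p·⟨q', x⟩` is approximated by `θ_{p·u*, q'}` for `u` with `q'·u ≈ q'`. -/
lemma rankOne_ι_right_comp_mem_range {p : mX.MX.carrier} (hp : p ∈ mX.MA) (q : X.carrier) :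
    mX.MX.rankOne p (mX.ι q) ∘L mX.ιL ∈ LinearMap.range (mX.compactsEmb 𝒦) := by
  refine mX.mem_range_compactsEmb_of_approx 𝒦 fun ε hε => ?_
  obtain ⟨v, hv⟩ := X.exists_norm_sub_smulR_lt q (ε := ε / (‖p‖ + 1)) (by positivity)
  obtain ⟨y, hy⟩ := (hp (mA.ι (star v)) ⟨_, rfl⟩).2
  have hk : mX.compactsEmb 𝒦 (𝒦.θ y q) = mX.MX.rankOne p (mX.ι (X.smulR q v)) ∘L mX.ιL :=
    ContinuousLinearMap.ext fun x => by
      rw [compactsEmb_apply, 𝒦.θ_apply, ← mX.ι_smulR, hy, mX.MX.smulR_mul, ← map_mul,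
        ← X.inn_smulR_left, ContinuousLinearMap.comp_apply, Corr.rankOne_apply, ιL_apply,
        mX.ι_inn]
  refine ⟨𝒦.θ y q, ?_⟩
  rw [hk, ← ContinuousLinearMap.sub_comp, ← Corr.rankOne_sub_right, ← ι_sub]
  refine (mX.norm_comp_ιL_le _).trans_lt <| (mX.MX.norm_rankOne_le _ _).trans_lt ?_
  rw [mX.ι_isometry]
  have hv' := (lt_div_iff₀ (by positivity)).mp hv
  nlinarith [norm_nonneg p, norm_nonneg (q - X.smulR q v)]

/-- `x ↦ p'·⟨q, x⟩` is approximated by `θ_{p', q·u*}` for `u` with `p'·u ≈ p'`. -/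
lemma rankOne_ι_left_comp_mem_range (p : X.carrier) {q : mX.MX.carrier} (hq : q ∈ mX.MA) :
    mX.MX.rankOne (mX.ι p) q ∘L mX.ιL ∈ LinearMap.range (mX.compactsEmb 𝒦) := by
  refine mX.mem_range_compactsEmb_of_approx 𝒦 fun ε hε => ?_
  obtain ⟨v, hv⟩ := X.exists_norm_sub_smulR_lt p (ε := ε / (‖q‖ + 1)) (by positivity)
  obtain ⟨y, hy⟩ := (hq (mA.ι (star v)) ⟨_, rfl⟩).2
  have hk : mX.compactsEmb 𝒦 (𝒦.θ p y) = mX.MX.rankOne (mX.ι (X.smulR p v)) q ∘L mX.ιL :=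
    ContinuousLinearMap.ext fun x => by
      rw [compactsEmb_apply, 𝒦.θ_apply, ← mX.ι_smulR, ← mX.ι_inn, hy, mX.MX.inn_smulR_left,
        map_star, star_star, ← mX.MX.smulR_mul, mX.ι_smulR, ContinuousLinearMap.comp_apply,
        Corr.rankOne_apply, ιL_apply]
  refine ⟨𝒦.θ p y, ?_⟩
  rw [hk, ← ContinuousLinearMap.sub_comp, ← Corr.rankOne_sub_left, ← ι_sub]
  refine (mX.norm_comp_ιL_le _).trans_lt <| (mX.MX.norm_rankOne_le _ _).trans_lt ?_
  rw [mX.ι_isometry]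
  have hv' := (lt_div_iff₀ (by positivity)).mp hv
  nlinarith [norm_nonneg q, norm_nonneg (p - X.smulR p v)]

lemma exists_act_eq_lact_of_mul_ι_eq {m : mA.M.carrier} {T : mX.MX.carrier →L[ℂ] mX.MX.carrier}
    (hT : T ∈ mX.MX.KSet mX.MA) (hTm : ∀ z ∈ mX.MA, mX.MX.lact m z = T z) {a b : A.carrier}
    (hb : m * mA.ι a = mA.ι b) : ∃ k, ∀ x, 𝒦.act k x = X.lact b x := by
  refine mX.exists_act_eq_lact 𝒦 ?_
  have hfactor : mX.ιL ∘L X.lactCLM b = T ∘L (mX.ιL ∘L X.lactCLM a) :=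
    ContinuousLinearMap.ext fun x => by
      simp only [ContinuousLinearMap.comp_apply, ιL_apply, Corr.lactCLM_apply]
      rw [← hTm _ (mX.ι_mem_MA _), ← mX.ι_lact a, ← mX.MX.lact_mul, hb, mX.ι_lact]
  rw [hfactor]
  refine mX.MX.map_mem_of_mem_KSet
    ((ContinuousLinearMap.compL ℂ _ _ _).flip (mX.ιL ∘L X.lactCLM a))
    (mX.isClosed_range_compactsEmb 𝒦) (fun p hp q hq => ?_) hT
  obtain ⟨q', hq'⟩ := (hq (mA.ι (star a)) ⟨_, rfl⟩).1
  have hpq : mX.MX.rankOne p q ∘L (mX.ιL ∘L X.lactCLM a)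
      = mX.MX.rankOne p (mX.ι q') ∘L mX.ιL :=
    ContinuousLinearMap.ext fun x => by
      simp only [ContinuousLinearMap.comp_apply, Corr.rankOne_apply, ιL_apply,
        Corr.lactCLM_apply]
      rw [hq', mX.MX.lact_adjoint, ← map_star, star_star, mX.ι_lact]
  simpa only [ContinuousLinearMap.flip_apply, ContinuousLinearMap.compL_apply, hpq]
    using mX.rankOne_ι_right_comp_mem_range 𝒦 hp q'

lemma exists_act_eq_lact_of_ι_mul_eq {m : mA.M.carrier} {T : mX.MX.carrier →L[ℂ] mX.MX.carrier}
    (hT : T ∈ mX.MX.KSet mX.MA) (hTm : ∀ z ∈ mX.MA, mX.MX.lact m z = T z) {a b : A.carrier}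
    (hb : mA.ι a * m = mA.ι b) : ∃ k, ∀ x, 𝒦.act k x = X.lact b x := by
  refine mX.exists_act_eq_lact 𝒦 ?_
  have hfactor : mX.ιL ∘L X.lactCLM b = mX.MX.lactCLM (mA.ι a) ∘L (T ∘L mX.ιL) :=
    ContinuousLinearMap.ext fun x => by
      simp only [ContinuousLinearMap.comp_apply, ιL_apply, Corr.lactCLM_apply]
      rw [← hTm _ (mX.ι_mem_MA _), ← mX.ι_lact, ← mX.MX.lact_mul, hb]
  rw [hfactor]
  refine mX.MX.map_mem_of_mem_KSet
    (ContinuousLinearMap.compL ℂ _ _ _ (mX.MX.lactCLM (mA.ι a)) ∘L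
      (ContinuousLinearMap.compL ℂ _ _ _).flip mX.ιL)
    (mX.isClosed_range_compactsEmb 𝒦) (fun p hp q hq => ?_) hT
  obtain ⟨p', hp'⟩ := (hp (mA.ι a) ⟨_, rfl⟩).1
  have hpq : mX.MX.lactCLM (mA.ι a) ∘L (mX.MX.rankOne p q ∘L mX.ιL)
      = mX.MX.rankOne (mX.ι p') q ∘L mX.ιL :=
    ContinuousLinearMap.ext fun x => by
      simp only [ContinuousLinearMap.comp_apply, Corr.rankOne_apply, ιL_apply,
        Corr.lactCLM_apply]
      rw [hp', mX.MX.lact_smulR]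
  simpa only [ContinuousLinearMap.comp_apply, ContinuousLinearMap.flip_apply,
    ContinuousLinearMap.compL_apply, hpq] using mX.rankOne_ι_left_comp_mem_range 𝒦 p' hq

lemma mul_ι_eq_zero_of_mem_subKatsura {m : mA.M.carrier}
    (hm : m ∈ mX.MX.subKatsura mX.MA Set.univ) {c : A.carrier} (hc : ∀ x, X.lact c x = 0) :
    m * mA.ι c = 0 :=
  hm.2.2 _ trivial fun _ hz => mX.lact_ι_eq_zero_of_mem_MA hc hz

lemma mem_Jideal_of_mul_ι_eq {m : mA.M.carrier} (hm : m ∈ mX.MX.subKatsura mX.MA Set.univ)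
    {a b : A.carrier} (hb : m * mA.ι a = mA.ι b) : b ∈ Jideal 𝒦 := by
  obtain ⟨T, hT, hTm⟩ := hm.2.1
  refine ⟨mX.exists_act_eq_lact_of_mul_ι_eq 𝒦 hT hTm hb, fun c hc => mA.injective ?_⟩
  have hac : ∀ x, X.lact (a * c) x = 0 := fun x => by rw [X.lact_mul, hc, X.lact_zero]
  rw [map_mul, ← hb, mul_assoc, ← map_mul, mX.mul_ι_eq_zero_of_mem_subKatsura hm hac, map_zero]

lemma mem_Jideal_of_ι_mul_eq {m : mA.M.carrier} (hm : m ∈ mX.MX.subKatsura mX.MA Set.univ)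
    {a b : A.carrier} (hb : mA.ι a * m = mA.ι b) : b ∈ Jideal 𝒦 := by
  obtain ⟨T, hT, hTm⟩ := hm.2.1
  refine ⟨mX.exists_act_eq_lact_of_ι_mul_eq 𝒦 hT hTm hb, fun c hc => mA.injective ?_⟩
  rw [map_mul, ← hb, mul_assoc, mX.mul_ι_eq_zero_of_mem_subKatsura hm hc, mul_zero, map_zero]

end Compacts

end MulCorr

/-- Let `(X, A)` be a nondegenerate C*-correspondence.  Then the
Katsura ideal of the `A`-multiplier correspondence satisfies
`J_{M_A(X)} ⊆ M(A; J_X)`, the strict closure of `J_X` in `M(A)`. -/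
theorem multiplier_katsura_ideal_subset
    {A : CAlg.{u}} (X : Corr A) (𝒦 : Compacts X)
    (mA : MulAlg A) (mX : MulCorr X mA) :
    mX.MX.subKatsura mX.MA Set.univ ⊆ mA.MI (Jideal 𝒦) := by
  intro m hm
  refine ⟨fun a => ?_, fun a => ?_⟩
  · obtain ⟨b, hb⟩ := mA.ideal_left m a
    exact ⟨b, mX.mem_Jideal_of_mul_ι_eq 𝒦 hm hb, hb⟩
  · obtain ⟨b, hb⟩ := mA.ideal_right m a
    exact ⟨b, mX.mem_Jideal_of_ι_mul_eq 𝒦 hm hb, hb⟩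

end Paper
end
end
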